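/- arXiv:1601.02218 — 3 statements merged into one kernel-verified Lean document; each statement's English description precedes it below -/
import Mathlib

section
/- Under the hypotheses and algorithm of Theorem 3.1 (Algorithm 1), suppose the iterates are defined up to step n ≥ 0. Then C_{n+1} = {v ∈ C_n : ‖z̄_n − v‖² ≤ ‖x_n − v‖² + ε_n} is a closed convex subset of C, F ⊆ C_{n+1}, and consequently C_{n+1} is nonempty, so the next iterate x_{n+1} = P_{C_{n+1}} x_0 is well defined. -/
open scoped RealInnerProductSpace
open Filter Topology

/-- `p` is the metric projection of `x` onto `K`. -/
def IsProjOn {H : Type*} [NormedAddCommGroup H] (K : Set H) (x p : H) : Prop :=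
  p ∈ K ∧ ∀ v ∈ K, ‖p - x‖ ≤ ‖v - x‖

section Aux
variable {H : Type*} [NormedAddCommGroup H] [InnerProductSpace ℝ H]

lemma combo_norm_sq (t : ℝ) (u w : H) :
    ‖t • u + (1 - t) • w‖ ^ 2
      = t * ‖u‖ ^ 2 + (1 - t) * ‖w‖ ^ 2 - t * (1 - t) * ‖u - w‖ ^ 2 := by
  have e : ∀ p : H, ‖p‖ ^ 2 = ⟪p, p⟫ := fun p => (real_inner_self_eq_norm_sq p).symm
  rw [e, e, e, e]
  simp only [inner_add_left, inner_add_right, inner_sub_left, inner_sub_right,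
    real_inner_smul_left, real_inner_smul_right, real_inner_comm u w]
  ring

lemma norm_le_of_inner_nonneg {v y u : H} (h : 0 ≤ ⟪y - v, u - y⟫) :
    ‖y - v‖ ≤ ‖u - v‖ := by
  have h1 : ⟪y - v, u - v⟫ = ⟪y - v, u - y⟫ + ⟪y - v, y - v⟫ := by
    rw [← inner_add_right]; congr 1; abel
  have h2 : ‖y - v‖ ^ 2 ≤ ⟪y - v, u - v⟫ := by
    rw [h1, real_inner_self_eq_norm_sq]; linarith
  have h3 : ⟪y - v, u - v⟫ ≤ ‖y - v‖ * ‖u - v‖ := real_inner_le_norm _ _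
  nlinarith [norm_nonneg (y - v), norm_nonneg (u - v)]

lemma existsUnique_proj [CompleteSpace H]
    (K : Set H) (hne : K.Nonempty) (hcl : IsClosed K) (hcv : Convex ℝ K) (x0 : H) :
    ∃! p, IsProjOn K x0 p := by
  haveI : Nonempty K := hne.to_subtype
  have hbdd : BddBelow (Set.range fun w : K => ‖x0 - ↑w‖) :=
    ⟨0, Set.forall_mem_range.2 fun _ => norm_nonneg _⟩
  obtain ⟨p0, hp0K, hp0min⟩ :=
    exists_norm_eq_iInf_of_complete_convex hne hcl.isComplete hcv x0
  have hproj : IsProjOn K x0 p0 := by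
    refine ⟨hp0K, fun w hw => ?_⟩
    rw [norm_sub_rev p0, norm_sub_rev w, hp0min]
    exact ciInf_le hbdd ⟨w, hw⟩
  refine ⟨p0, hproj, fun q hq => ?_⟩
  have hq1 : ‖x0 - q‖ = ⨅ w : K, ‖x0 - ↑w‖ := by
    refine le_antisymm (le_ciInf fun w => ?_) (ciInf_le hbdd ⟨q, hq.1⟩)
    rw [norm_sub_rev x0 q, norm_sub_rev x0 ↑w]
    exact hq.2 w.1 w.2
  have h1 : ⟪x0 - q, p0 - q⟫ ≤ 0 :=
    (norm_eq_iInf_iff_real_inner_le_zero hcv hq.1).mp hq1 p0 hp0K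
  have h2 : ⟪x0 - p0, q - p0⟫ ≤ 0 :=
    (norm_eq_iInf_iff_real_inner_le_zero hcv hp0K).mp hp0min q hq.1
  have e : q - p0 = (x0 - p0) - (x0 - q) := by abel
  have h3 : ‖q - p0‖ ^ 2 = ⟪x0 - p0, q - p0⟫ + ⟪x0 - q, p0 - q⟫ := by
    rw [← real_inner_self_eq_norm_sq]
    nth_rewrite 1 [e]
    rw [inner_sub_left]
    have : ⟪x0 - q, q - p0⟫ = -⟪x0 - q, p0 - q⟫ := by
      rw [show q - p0 = -(p0 - q) from by abel, inner_neg_right]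
    rw [this]; ring
  have h4 : ‖q - p0‖ ^ 2 ≤ 0 := by rw [h3]; linarith
  have h5 : q - p0 = 0 := by
    have h6 := sq_nonneg ‖q - p0‖
    have : ‖q - p0‖ = 0 := by nlinarith
    exact norm_eq_zero.mp this
  exact sub_eq_zero.mp h5

end Aux

set_option maxHeartbeats 1000000 in
/-- **Lemma 3.1.** If Algorithm 1 reaches iteration `n ≥ 0`, then `Cₙ₊₁` is
a closed convex subset of `C`, `F ⊆ Cₙ₊₁`, hence `Cₙ₊₁` is nonempty and the next iterate
`xₙ₊₁ = P_{Cₙ₊₁} x₀` is well defined. -/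
theorem algorithm1_well_defined
    {H : Type*} [NormedAddCommGroup H] [InnerProductSpace ℝ H] [CompleteSpace H]
    (C : Set H) (hCne : C.Nonempty) (hCcl : IsClosed C) (hCcv : Convex ℝ C)
    (N M : ℕ) (hN : 0 < N) (hM : 0 < M)
    -- the bifunctions fᵢ satisfy (A1)-(A4)
    (f : Fin N → H → H → ℝ)
    (hfA1 : ∀ i, ∀ x ∈ C, f i x x = 0)
    (hfA2 : ∀ i, ∀ x ∈ C, ∀ y ∈ C, f i x y + f i y x ≤ 0)
    (hfA3 : ∀ i, ∀ x ∈ C, ∀ y ∈ C, ∀ z ∈ C,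
      Filter.limsup (fun t : ℝ => f i (t • z + (1 - t) • x) y) (nhdsWithin 0 (Set.Ioi 0))
        ≤ f i x y)
    (hfA4conv : ∀ i, ∀ x ∈ C, ConvexOn ℝ C (f i x))
    (hfA4lsc : ∀ i, ∀ x ∈ C, LowerSemicontinuousOn (f i x) C)
    -- the operators Aᵢ are α-inverse strongly monotone on C
    (A : Fin N → H → H) (α : ℝ) (hα : 0 < α)
    (hism : ∀ i, ∀ x ∈ C, ∀ y ∈ C, α * ‖A i x - A i y‖ ^ 2 ≤ ⟪A i x - A i y, x - y⟫)
    -- the mappings Sⱼ : C → C are asymptotically κ-strictly pseudocontractive with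
    -- the same sequence {kₙ} ⊆ [1,∞), kₙ → 1
    (S : Fin M → H → H) (hS : ∀ j, Set.MapsTo (S j) C C)
    (κ : ℝ) (hκ0 : 0 ≤ κ) (hκ1 : κ < 1)
    (k : ℕ → ℝ) (hk1 : ∀ n, 1 ≤ k n)
    (hklim : Filter.Tendsto k Filter.atTop (nhds 1))
    (hasym : ∀ j, ∀ n, 1 ≤ n → ∀ x ∈ C, ∀ y ∈ C,
      ‖(S j)^[n] x - (S j)^[n] y‖ ^ 2
        ≤ k n * ‖x - y‖ ^ 2 + κ * ‖(x - (S j)^[n] x) - (y - (S j)^[n] y)‖ ^ 2)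
    -- the solution set F is nonempty and bounded by ω
    (F : Set H)
    (hF : F = {v ∈ C | ∀ i, ∀ y ∈ C, 0 ≤ f i v y + ⟪A i v, y - v⟫} ∩
      {v | ∀ j, S j v = v})
    (hFne : F.Nonempty) (ω : ℝ) (hω : 0 < ω) (hFb : ∀ v ∈ F, ‖v‖ ≤ ω)
    -- control parameters
    (a : ℕ → ℝ) (ha0 : ∀ n, 0 < a n) (ha1 : ∀ n, a n < 1)
    (halimsup : Filter.limsup a Filter.atTop < 1)
    (β : ℕ → ℝ) (b : ℝ) (hbκ : κ < b) (hb1 : b < 1) (hβ : ∀ n, κ ≤ β n ∧ β n ≤ b)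
    (r : ℕ → ℝ) (d e : ℝ) (hd : 0 < d) (he : e < 2 * α) (hr : ∀ n, d ≤ r n ∧ r n ≤ e)
    -- the iterates of Algorithm 1
    (x : ℕ → H) (y : ℕ → Fin N → H) (z : ℕ → Fin M → H)
    (iN : ℕ → Fin N) (jM : ℕ → Fin M) (ybar zbar : ℕ → H) (Cset : ℕ → Set H)
    -- the algorithm has reached iteration n
    (n : ℕ)
    (hx0 : x 0 ∈ C) (hC0 : Cset 0 = C)
    -- (i) yₘⁱ solves the regularized generalized equilibrium problem, m ≤ n
    (hy : ∀ m ≤ n, ∀ i, y m i ∈ C ∧ ∀ w ∈ C,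
      0 ≤ f i (y m i) w + ⟪A i (x m), w - y m i⟫ +
        (1 / r m) * ⟪w - y m i, y m i - x m⟫)
    -- (ii) iₘ maximizes ‖yₘⁱ - xₘ‖ and ȳₘ = yₘ^{iₘ}
    (hiN : ∀ m ≤ n, ∀ i, ‖y m i - x m‖ ≤ ‖y m (iN m) - x m‖)
    (hybar : ∀ m ≤ n, ybar m = y m (iN m))
    -- (iii) zₘʲ = αₘ xₘ + (1-αₘ)(βₘ ȳₘ + (1-βₘ) Sⱼᵐ ȳₘ)
    (hz : ∀ m ≤ n, ∀ j, z m j = a m • x m +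
      (1 - a m) • (β m • ybar m + (1 - β m) • (S j)^[m] (ybar m)))
    -- (iv) jₘ maximizes ‖zₘʲ - xₘ‖ and z̄ₘ = zₘ^{jₘ}
    (hjM : ∀ m ≤ n, ∀ j, ‖z m j - x m‖ ≤ ‖z m (jM m) - x m‖)
    (hzbar : ∀ m ≤ n, zbar m = z m (jM m))
    -- (v) Cₘ₊₁ = {v ∈ Cₘ : ‖z̄ₘ - v‖² ≤ ‖xₘ - v‖² + εₘ}, εₘ = (kₘ - 1)(‖xₘ‖ + ω)²
    (hCset : ∀ m ≤ n, Cset (m + 1) =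
      {v ∈ Cset m | ‖zbar m - v‖ ^ 2 ≤ ‖x m - v‖ ^ 2 + (k m - 1) * (‖x m‖ + ω) ^ 2})
    -- (vi) xₘ₊₁ = P_{Cₘ₊₁} x₀ for m < n
    (hxproj : ∀ m < n, IsProjOn (Cset (m + 1)) (x 0) (x (m + 1))) :
    IsClosed (Cset (n + 1)) ∧ Convex ℝ (Cset (n + 1)) ∧ Cset (n + 1) ⊆ C ∧
      F ⊆ Cset (n + 1) ∧ (Cset (n + 1)).Nonempty ∧
      ∃! p, IsProjOn (Cset (n + 1)) (x 0) p := by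
  -- basic facts about F
  have hFC : F ⊆ C := by rw [hF]; exact fun v hv => hv.1.1
  -- the main induction
  have key : ∀ m, m ≤ n + 1 →
      IsClosed (Cset m) ∧ Convex ℝ (Cset m) ∧ Cset m ⊆ C ∧ F ⊆ Cset m := by
    intro m
    induction m with
    | zero => intro _; rw [hC0]; exact ⟨hCcl, hCcv, subset_rfl, hFC⟩
    | succ p ih =>
      intro hp
      have hpn : p ≤ n := by omega
      obtain ⟨ihcl, ihcv, ihsub, ihF⟩ := ih (by omega)
      rw [hCset p hpn]
      have hsep : {v ∈ Cset p | ‖zbar p - v‖ ^ 2 ≤ ‖x p - v‖ ^ 2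
          + (k p - 1) * (‖x p‖ + ω) ^ 2}
          = Cset p ∩ {v | ‖zbar p - v‖ ^ 2 ≤ ‖x p - v‖ ^ 2
          + (k p - 1) * (‖x p‖ + ω) ^ 2} := rfl
      refine ⟨?_, ?_, ?_, ?_⟩
      · -- closed
        rw [hsep]
        refine ihcl.inter (isClosed_le ?_ ?_)
        · exact ((continuous_const.sub continuous_id).norm.pow 2)
        · exact ((continuous_const.sub continuous_id).norm.pow 2).add continuous_const
      · -- convex
        intro v hv w hw ta tb hta htb hab
        have hb' : tb = 1 - ta := by linarith
        subst hb'
        refine ⟨ihcv hv.1 hw.1 hta htb hab, ?_⟩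
        have e1 : zbar p - (ta • v + (1 - ta) • w)
            = ta • (zbar p - v) + (1 - ta) • (zbar p - w) := by module
        have e2 : x p - (ta • v + (1 - ta) • w)
            = ta • (x p - v) + (1 - ta) • (x p - w) := by module
        have e3 : zbar p - v - (zbar p - w) = w - v := by abel
        have e4 : x p - v - (x p - w) = w - v := by abel
        show ‖zbar p - (ta • v + (1 - ta) • w)‖ ^ 2 ≤ _
        rw [e1, e2, combo_norm_sq, combo_norm_sq, e3, e4]
        have h1 := mul_le_mul_of_nonneg_left hv.2 hta
        have h2 := mul_le_mul_of_nonneg_left hw.2 htb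
        nlinarith [h1, h2]
      · -- subset of C
        rw [hsep]; exact fun v hv => ihsub hv.1
      · -- F ⊆ C_{p+1}
        intro v hvF
        have hvC : v ∈ C := hFC hvF
        have hvGEP : ∀ i, ∀ w ∈ C, 0 ≤ f i v w + ⟪A i v, w - v⟫ := by
          rw [hF] at hvF; exact hvF.1.2
        have hvFix : ∀ j, S j v = v := by rw [hF] at hvF; exact hvF.2
        -- x p ∈ C
        have hxC : x p ∈ C := by
          rcases Nat.eq_zero_or_pos p with h0 | hpos
          · subst h0; exact hx0
          · have h1 : p - 1 < n := by omega
            have h2 := (hxproj (p - 1) h1).1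
            have h3 : p - 1 + 1 = p := by omega
            rw [h3] at h2
            exact ihsub h2
        have hrp0 : 0 < r p := lt_of_lt_of_le hd (hr p).1
        have hrp2 : r p < 2 * α := lt_of_le_of_lt (hr p).2 he
        -- Step 1: ‖y p i - v‖ ≤ ‖x p - v‖
        have hy_est : ∀ i, ‖y p i - v‖ ≤ ‖x p - v‖ := by
          intro i
          obtain ⟨hyiC, hyineq⟩ := hy p hpn i
          set yv := y p i with hyv
          have h1 := hyineq v hvC
          have h2 := hvGEP i yv hyiC
          have h3 := hfA2 i yv hyiC v hvC
          set u := x p - r p • (A i (x p) - A i v) with hu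
          set a' := ⟪yv - v, A i (x p) - A i v⟫ with ha'
          set b' := ⟪yv - v, x p - yv⟫ with hb'
          have eA : ⟪A i (x p), v - yv⟫ + ⟪A i v, yv - v⟫ = -a' := by
            rw [ha']
            simp only [inner_sub_left, inner_sub_right]
            rw [real_inner_comm (A i (x p)) v, real_inner_comm (A i (x p)) yv,
              real_inner_comm (A i v) yv, real_inner_comm (A i v) v,
              real_inner_comm yv (A i (x p)), real_inner_comm v (A i (x p)),
              real_inner_comm yv (A i v), real_inner_comm v (A i v)]
            ring
          have eB : ⟪v - yv, yv - x p⟫ = b' := by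
            rw [hb', show v - yv = -(yv - v) from by abel,
              show yv - x p = -(x p - yv) from by abel, inner_neg_neg]
          have hsum : 0 ≤ -a' + (1 / r p) * b' := by
            rw [← eB] at *
            linarith [eA ▸ (by linarith : (0:ℝ) ≤ ⟪A i (x p), v - yv⟫ + ⟪A i v, yv - v⟫
              + (1 / r p) * ⟪v - yv, yv - x p⟫)]
          have h5 : r p * (-a' + (1 / r p) * b') = b' - r p * a' := by
            field_simp
            ring
          have h4 : 0 ≤ ⟪yv - v, u - yv⟫ := by
            have eC : ⟪yv - v, u - yv⟫ = b' - r p * a' := by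
              have edec : u - yv = (x p - yv) - r p • (A i (x p) - A i v) := by
                rw [hu]; module
              rw [edec, inner_sub_right, real_inner_smul_right, hb', ha']
            rw [eC, ← h5]
            exact mul_nonneg hrp0.le hsum
          have h6 : ‖yv - v‖ ≤ ‖u - v‖ := norm_le_of_inner_nonneg h4
          have h7 : ‖u - v‖ ≤ ‖x p - v‖ := by
            have edec : u - v = (x p - v) - r p • (A i (x p) - A i v) := by
              rw [hu]; module
            have h8 : ‖u - v‖ ^ 2 = ‖x p - v‖ ^ 2
                - 2 * (r p * ⟪A i (x p) - A i v, x p - v⟫)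
                + r p ^ 2 * ‖A i (x p) - A i v‖ ^ 2 := by
              rw [edec, norm_sub_sq_real, real_inner_smul_right, norm_smul,
                Real.norm_eq_abs, mul_pow, sq_abs]
              rw [real_inner_comm]
            have hismv := hism i (x p) hxC v hvC
            have hA := mul_le_mul_of_nonneg_left hismv
              (by positivity : (0:ℝ) ≤ 2 * r p)
            have hB : 0 ≤ (2 * α - r p) * r p * ‖A i (x p) - A i v‖ ^ 2 :=
              mul_nonneg (mul_nonneg (by linarith) hrp0.le) (sq_nonneg _)
            have h9 : ‖u - v‖ ^ 2 ≤ ‖x p - v‖ ^ 2 := by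
              rw [h8]; nlinarith [hA, hB]
            nlinarith [norm_nonneg (u - v), norm_nonneg (x p - v)]
          exact h6.trans h7
        have hybarC : ybar p ∈ C := by rw [hybar p hpn]; exact (hy p hpn (iN p)).1
        have hybar_est : ‖ybar p - v‖ ≤ ‖x p - v‖ := by
          rw [hybar p hpn]; exact hy_est (iN p)
        -- Step 2: bound on iterated S
        have hSkey : ∀ j, ‖(S j)^[p] (ybar p) - v‖ ^ 2
            ≤ k p * ‖ybar p - v‖ ^ 2 + κ * ‖ybar p - (S j)^[p] (ybar p)‖ ^ 2 := by
          intro j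
          rcases Nat.eq_zero_or_pos p with h0 | hpos
          · subst h0
            simp only [Function.iterate_zero, id_eq]
            nlinarith [hk1 0, sq_nonneg ‖ybar 0 - v‖, sq_nonneg ‖ybar 0 - ybar 0‖,
              sq_nonneg (‖ybar 0 - ybar 0‖)]
          · have h1 := hasym j p hpos (ybar p) hybarC v hvC
            rwa [Function.iterate_fixed (hvFix j) p, sub_self, sub_zero] at h1
        -- Step 3: bound on ‖z p j - v‖²
        have hz_est : ∀ j, ‖z p j - v‖ ^ 2
            ≤ ‖x p - v‖ ^ 2 + (k p - 1) * (‖x p‖ + ω) ^ 2 := by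
          intro j
          rw [hz p hpn j]
          set t := (S j)^[p] (ybar p) with ht
          set w := β p • ybar p + (1 - β p) • t with hw
          have e1 : a p • x p + (1 - a p) • w - v
              = a p • (x p - v) + (1 - a p) • (w - v) := by module
          have e3 : w - v = β p • (ybar p - v) + (1 - β p) • (t - v) := by
            rw [hw]; module
          have e5 : ybar p - v - (t - v) = ybar p - t := by abel
          have hb1 : κ ≤ β p := (hβ p).1
          have hb2 : β p ≤ b := (hβ p).2
          have hkp := hk1 p
          have hskey := hSkey j
          have h1mβ : (0:ℝ) ≤ 1 - β p := by linarith
          have hwv : ‖w - v‖ ^ 2 ≤ k p * ‖ybar p - v‖ ^ 2 := by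
            have ec : ‖w - v‖ ^ 2 = β p * ‖ybar p - v‖ ^ 2
                + (1 - β p) * ‖t - v‖ ^ 2
                - β p * (1 - β p) * ‖ybar p - t‖ ^ 2 := by
              rw [e3, combo_norm_sq, e5]
            rw [ec]
            nlinarith [mul_le_mul_of_nonneg_left hskey h1mβ,
              mul_nonneg (mul_nonneg h1mβ (by linarith : (0:ℝ) ≤ β p - κ))
                (sq_nonneg ‖ybar p - t‖),
              mul_nonneg (mul_nonneg (by linarith : (0:ℝ) ≤ β p)
                (by linarith : (0:ℝ) ≤ k p - 1)) (sq_nonneg ‖ybar p - v‖)]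
          have hfin : ‖x p - v‖ ≤ ‖x p‖ + ω := by
            have := hFb v hvF
            have := norm_sub_le (x p) v
            linarith
          have hyx2 : ‖ybar p - v‖ ^ 2 ≤ ‖x p - v‖ ^ 2 :=
            pow_le_pow_left₀ (norm_nonneg _) hybar_est 2
          have hxv2 : ‖x p - v‖ ^ 2 ≤ (‖x p‖ + ω) ^ 2 :=
            pow_le_pow_left₀ (norm_nonneg _) hfin 2
          have hap := ha0 p
          have hap1 := ha1 p
          rw [e1, combo_norm_sq]
          have h1 : (1 - a p) * ‖w - v‖ ^ 2 ≤ (1 - a p) * (k p * ‖ybar p - v‖ ^ 2) :=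
            mul_le_mul_of_nonneg_left hwv (by linarith)
          have h2 : (1 - a p) * (k p * ‖ybar p - v‖ ^ 2)
              ≤ (1 - a p) * (k p * ‖x p - v‖ ^ 2) :=
            mul_le_mul_of_nonneg_left
              (mul_le_mul_of_nonneg_left hyx2 (by linarith)) (by linarith)
          have h3 : (k p - 1) * ‖x p - v‖ ^ 2 ≤ (k p - 1) * (‖x p‖ + ω) ^ 2 :=
            mul_le_mul_of_nonneg_left hxv2 (by linarith)
          have h4 : 0 ≤ a p * (1 - a p) * ‖x p - v - (w - v)‖ ^ 2 :=
            mul_nonneg (mul_nonneg hap.le (by linarith)) (sq_nonneg _)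
          have h5 : 0 ≤ a p * ((k p - 1) * ‖x p - v‖ ^ 2) :=
            mul_nonneg hap.le (mul_nonneg (by linarith) (sq_nonneg _))
          nlinarith [h1, h2, h3, h4, h5]
        refine ⟨ihF hvF, ?_⟩
        show ‖zbar p - v‖ ^ 2 ≤ _
        rw [hzbar p hpn]
        exact hz_est (jM p)
  obtain ⟨hcl, hcv, hsub, hFsub⟩ := key (n + 1) le_rfl
  have hne : (Cset (n + 1)).Nonempty := hFne.mono hFsub
  exact ⟨hcl, hcv, hsub, hFsub, hne, existsUnique_proj _ hne hcl hcv (x 0)⟩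
end

section
/- Let {x_n}, {y_n^i}, {z_n^j} be the sequences generated by Algorithm 1 (under the hypotheses of Theorem 3.1). Then {x_n} is a Cauchy sequence and lim_{n→∞} ‖x_n − y_n^i‖ = lim_{n→∞} ‖x_n − z_n^j‖ = lim_{n→∞} ‖x_n − S_j x_n‖ = 0 for all i = 1,…,N and j = 1,…,M. -/
open scoped RealInnerProductSpace
open Filter Topology

/-!
Shrinking projections. Every `v ∈ F` lies in every `Cₙ`: the resolvent step gives
`‖ȳₙ - v‖ ≤ ‖xₙ - v‖`, and the averaged step gives `‖z̄ₙ - v‖² ≤ kₙ ‖xₙ - v‖²`, whose excess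
over `‖xₙ - v‖²` is at most `εₙ`. The `Cₙ` are nested convex sets (`C` cut by half-spaces) and
`xₙ = P_{Cₙ} x₀`, so the variational inequality of the projection gives
`‖xₘ - xₙ‖² ≤ ‖xₘ - x₀‖² - ‖xₙ - x₀‖²` for `m ≥ n`; as `‖xₙ - x₀‖` is nondecreasing and bounded
by `‖v - x₀‖`, `{xₙ}` is Cauchy. Since `xₙ₊₁ ∈ Cₙ₊₁`, this forces `‖xₙ - z̄ₙ‖ → 0`, and the two
Fejér inequalities read backwards then give `‖xₙ - ȳₙ‖ → 0` and `‖Sⱼⁿ ȳₙ - ȳₙ‖ → 0`. Finally the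
iterates `Sⱼⁿ` are uniformly Lipschitz, which turns `‖Sⱼⁿ xₙ - xₙ‖ → 0` and
`‖xₙ₊₁ - xₙ‖ → 0` into `‖Sⱼ xₙ - xₙ‖ → 0`.
-/

theorem antitone_of_succ_eq_sep {α : Type*} {K : ℕ → Set α} {P : ℕ → α → Prop}
    (hK : ∀ n, K (n + 1) = {v ∈ K n | P n v}) : Antitone K :=
  antitone_nat_of_succ_le fun n => by rw [hK n]; exact Set.sep_subset _ _

section Real

theorem tendsto_zero_of_sq_le {ι : Type*} {l : Filter ι} {t g : ι → ℝ} (ht : ∀ n, 0 ≤ t n)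
    (h : ∀ n, t n ^ 2 ≤ g n) (hg : Tendsto g l (𝓝 0)) : Tendsto t l (𝓝 0) := by
  have hsqrt := hg.sqrt
  rw [Real.sqrt_zero] at hsqrt
  refine squeeze_zero ht (fun n => ?_) hsqrt
  rw [← Real.sqrt_sq (ht n)]
  exact Real.sqrt_le_sqrt (h n)

/-- `(1 + κ + K) / (1 - κ)` bounds the positive root of `(1 - κ) t² - 2κ t - (K + κ)`. -/
theorem le_mul_of_sq_le_sq_add_sq {D c K κ : ℝ} (hD : 0 ≤ D) (hc : 0 ≤ c) (hK : 0 ≤ K)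
    (hκ1 : κ < 1) (h : D ^ 2 ≤ K * c ^ 2 + κ * (c + D) ^ 2) :
    (1 - κ) * D ≤ (1 + κ + K) * c := by
  by_contra! hlt
  nlinarith [mul_le_mul_of_nonneg_left hlt.le hD, mul_nonneg hK hc,
    mul_nonneg (mul_nonneg hK hc) hD]

theorem sq_le_mul_of_sq_sub_mul_add_le {t g r P d e α : ℝ} (hd : 0 < d) (hdr : d ≤ r)
    (hre : r ≤ e) (he : e < 2 * α) (h : (t - r * g) ^ 2 + r * (2 * α - r) * g ^ 2 ≤ P) :
    t ^ 2 ≤ 2 * (1 + e ^ 2 / (d * (2 * α - e))) * P := by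
  have hδ : 0 < d * (2 * α - e) := mul_pos hd (by linarith)
  have hrr : d * (2 * α - e) ≤ r * (2 * α - r) :=
    mul_le_mul hdr (by linarith) (by linarith) (by linarith)
  have hg : g ^ 2 ≤ P / (d * (2 * α - e)) := by
    rw [le_div_iff₀ hδ]
    nlinarith [sq_nonneg (t - r * g), mul_le_mul_of_nonneg_right hrr (sq_nonneg g)]
  have hre2 : r ^ 2 ≤ e ^ 2 := pow_le_pow_left₀ (by linarith) hre 2
  have hP : (t - r * g) ^ 2 ≤ P := by
    nlinarith [mul_nonneg (mul_nonneg (by linarith : (0 : ℝ) ≤ r)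
      (by linarith : (0 : ℝ) ≤ 2 * α - r)) (sq_nonneg g)]
  calc t ^ 2 ≤ 2 * (t - r * g) ^ 2 + 2 * r ^ 2 * g ^ 2 := by
        nlinarith [sq_nonneg (t - r * g - r * g)]
    _ ≤ 2 * P + 2 * e ^ 2 * (P / (d * (2 * α - e))) := by
        gcongr
    _ = 2 * (1 + e ^ 2 / (d * (2 * α - e))) * P := by ring

theorem le_add_sub_one_mul_of_le_mul_add_mul {a k p q w R : ℝ} (ha0 : 0 ≤ a) (ha1 : a ≤ 1)
    (hk : 1 ≤ k) (hq : 0 ≤ q) (hqp : q ≤ p) (hpR : p ≤ R)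
    (hw : w ≤ a * p + (1 - a) * (k * q)) : w ≤ p + (k - 1) * R := by
  nlinarith [mul_le_mul_of_nonneg_left hqp (mul_nonneg (sub_nonneg.2 ha1) (by linarith : 0 ≤ k)),
    mul_le_mul_of_nonneg_left hpR (sub_nonneg.2 hk), mul_nonneg ha0 (sub_nonneg.2 hk)]

theorem tendsto_sub_of_le_mul_add_mul {a k p q w : ℕ → ℝ} {B c : ℝ} (hc : c < 1)
    (hac : ∀ᶠ n in atTop, a n ≤ c) (ha0 : ∀ n, 0 ≤ a n) (hk : ∀ n, 1 ≤ k n)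
    (hklim : Tendsto k atTop (𝓝 1)) (hq : ∀ n, 0 ≤ q n) (hqp : ∀ n, q n ≤ p n)
    (hqB : ∀ n, q n ≤ B) (hw : ∀ n, w n ≤ a n * p n + (1 - a n) * (k n * q n))
    (hpw : Tendsto (fun n => p n - w n) atTop (𝓝 0)) :
    Tendsto (fun n => p n - q n) atTop (𝓝 0) := by
  refine squeeze_zero' (.of_forall fun n => sub_nonneg.2 (hqp n))
    (g := fun n => (p n - w n + (k n - 1) * B) / (1 - c)) ?_ ?_
  · filter_upwards [hac] with n han
    rw [le_div_iff₀ (by linarith)]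
    have := hk n
    nlinarith [hw n, hqB n, hqp n, mul_nonneg (ha0 n) (hq n),
      mul_nonneg (mul_nonneg (ha0 n) (hq n)) (sub_nonneg.2 (hk n))]
  · simpa using ((hpw.add ((hklim.sub_const 1).mul_const B)).div_const (1 - c))

end Real

section Normed

variable {E : Type*} [SeminormedAddCommGroup E]

theorem CauchySeq.tendsto_norm_succ_sub {x : ℕ → E} (hx : CauchySeq x) :
    Tendsto (fun n => ‖x (n + 1) - x n‖) atTop (𝓝 0) := by
  have := (cauchySeq_iff_tendsto_dist_atTop_0.1 hx).comp
    (((tendsto_add_atTop_nat 1).prodMk tendsto_id).mono_right prod_atTop_atTop_eq.le)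
  simpa [Function.comp_def, dist_eq_norm] using this

theorem CauchySeq.tendsto_norm_sub_of_sq_le {x z : ℕ → E} {ε : ℕ → ℝ} (hx : CauchySeq x)
    (hz : ∀ n, ‖z n - x (n + 1)‖ ^ 2 ≤ ‖x n - x (n + 1)‖ ^ 2 + ε n)
    (hε : Tendsto ε atTop (𝓝 0)) : Tendsto (fun n => ‖x n - z n‖) atTop (𝓝 0) := by
  have hstep : Tendsto (fun n => ‖x n - x (n + 1)‖) atTop (𝓝 0) := by
    simpa only [norm_sub_rev] using hx.tendsto_norm_succ_sub
  have hzx : Tendsto (fun n => ‖z n - x (n + 1)‖) atTop (𝓝 0) :=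
    tendsto_zero_of_sq_le (fun _ => norm_nonneg _) hz (by simpa using (hstep.pow 2).add hε)
  refine squeeze_zero (fun _ => norm_nonneg _) (fun n => ?_) (by simpa using hstep.add hzx)
  rw [norm_sub_rev (z n)]
  exact norm_sub_le_norm_sub_add_norm_sub _ _ _

theorem tendsto_norm_sq_sub_norm_sq {u w : ℕ → E} {B : ℝ} (hu : ∀ n, ‖u n‖ ≤ B)
    (huw : Tendsto (fun n => ‖u n - w n‖) atTop (𝓝 0)) :
    Tendsto (fun n => ‖u n‖ ^ 2 - ‖w n‖ ^ 2) atTop (𝓝 0) := by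
  refine squeeze_zero_norm (a := fun n => ‖u n - w n‖ * (2 * B + ‖u n - w n‖)) (fun n => ?_)
    (by simpa using huw.mul ((huw.const_add (2 * B))))
  have hw : ‖w n‖ ≤ B + ‖u n - w n‖ := by
    linarith [hu n, norm_le_norm_add_norm_sub' (w n) (u n), norm_sub_rev (u n) (w n)]
  calc ‖‖u n‖ ^ 2 - ‖w n‖ ^ 2‖ = |‖u n‖ - ‖w n‖| * (‖u n‖ + ‖w n‖) := by
        rw [Real.norm_eq_abs, sq_sub_sq, abs_mul, abs_of_nonneg (by positivity), mul_comm]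
    _ ≤ ‖u n - w n‖ * (2 * B + ‖u n - w n‖) :=
        mul_le_mul (abs_norm_sub_norm_le _ _) (by linarith [hu n]) (by positivity) (norm_nonneg _)

theorem tendsto_norm_iterate_sub_of_tendsto_norm_sub {C : Set E} {T : E → E} {L : ℝ}
    (hL : ∀ n, 1 ≤ n → ∀ x ∈ C, ∀ y ∈ C, ‖T^[n] x - T^[n] y‖ ≤ L * ‖x - y‖)
    {x y : ℕ → E} (hx : ∀ n, x n ∈ C) (hy : ∀ n, y n ∈ C)
    (hxy : Tendsto (fun n => ‖x n - y n‖) atTop (𝓝 0))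
    (hTy : Tendsto (fun n => ‖T^[n] (y n) - y n‖) atTop (𝓝 0)) :
    Tendsto (fun n => ‖T^[n] (x n) - x n‖) atTop (𝓝 0) := by
  refine squeeze_zero' (.of_forall fun _ => norm_nonneg _)
    (g := fun n => (L + 1) * ‖x n - y n‖ + ‖T^[n] (y n) - y n‖) ?_
    (by simpa using (hxy.const_mul (L + 1)).add hTy)
  filter_upwards [eventually_ge_atTop 1] with n hn
  have := hL n hn _ (hx n) _ (hy n)
  have := norm_sub_le_norm_sub_add_norm_sub (T^[n] (x n)) (T^[n] (y n)) (x n)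
  have := norm_sub_le_norm_sub_add_norm_sub (T^[n] (y n)) (y n) (x n)
  rw [norm_sub_rev (y n)] at this
  linarith

theorem tendsto_norm_sub_apply_of_tendsto_norm_iterate_sub {C : Set E} {T : E → E}
    (hT : Set.MapsTo T C C) {L : ℝ} (hL0 : 0 ≤ L)
    (hL : ∀ n, 1 ≤ n → ∀ x ∈ C, ∀ y ∈ C, ‖T^[n] x - T^[n] y‖ ≤ L * ‖x - y‖)
    {x : ℕ → E} (hx : ∀ n, x n ∈ C) (hstep : Tendsto (fun n => ‖x (n + 1) - x n‖) atTop (𝓝 0))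
    (hiter : Tendsto (fun n => ‖T^[n] (x n) - x n‖) atTop (𝓝 0)) :
    Tendsto (fun n => ‖x n - T (x n)‖) atTop (𝓝 0) := by
  rw [← tendsto_add_atTop_iff_nat 1]
  refine squeeze_zero' (.of_forall fun _ => norm_nonneg _)
    (g := fun m => ‖T^[m + 1] (x (m + 1)) - x (m + 1)‖
      + L * ((L + 1) * ‖x (m + 1) - x m‖ + ‖T^[m] (x m) - x m‖)) ?_ ?_
  · filter_upwards [eventually_ge_atTop 1] with m hm
    have h1 : ‖T^[m + 1] (x (m + 1)) - T (x (m + 1))‖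
        ≤ L * ‖T^[m] (x (m + 1)) - x (m + 1)‖ := by
      rw [Function.iterate_succ_apply']
      simpa using hL 1 le_rfl _ ((hT.iterate m) (hx (m + 1))) _ (hx (m + 1))
    have h2 : ‖T^[m] (x (m + 1)) - x (m + 1)‖
        ≤ (L + 1) * ‖x (m + 1) - x m‖ + ‖T^[m] (x m) - x m‖ := by
      have := hL m hm _ (hx (m + 1)) _ (hx m)
      have := norm_sub_le_norm_sub_add_norm_sub (T^[m] (x (m + 1))) (T^[m] (x m)) (x (m + 1))
      have := norm_sub_le_norm_sub_add_norm_sub (T^[m] (x m)) (x m) (x (m + 1))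
      rw [norm_sub_rev (x m)] at this
      linarith
    have h3 :=
      norm_sub_le_norm_sub_add_norm_sub (x (m + 1)) (T^[m + 1] (x (m + 1))) (T (x (m + 1)))
    rw [norm_sub_rev (x (m + 1)) (T^[m + 1] (x (m + 1)))] at h3
    nlinarith [mul_le_mul_of_nonneg_left h2 hL0]
  · simpa using ((tendsto_add_atTop_iff_nat 1).2 hiter).add
      (((hstep.const_mul (L + 1)).add hiter).const_mul L)

theorem mul_norm_sub_le_norm_mann_step_sub [NormedSpace ℝ E]
    {a β : ℝ} (ha : a ≤ 1) (hβ : β ≤ 1) (x y p : E) :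
    (1 - a) * (1 - β) * ‖p - y‖
      ≤ ‖a • x + (1 - a) • (β • y + (1 - β) • p) - x‖ + (1 - a) * ‖x - y‖ := by
  have e : ((1 - a) * (1 - β)) • (p - y)
      = (a • x + (1 - a) • (β • y + (1 - β) • p) - x) + (1 - a) • (x - y) := by module
  have h := norm_add_le (a • x + (1 - a) • (β • y + (1 - β) • p) - x) ((1 - a) • (x - y))
  rwa [← e, norm_smul, norm_smul, Real.norm_of_nonneg (by nlinarith),
    Real.norm_of_nonneg (by linarith)] at h

theorem tendsto_norm_sub_of_tendsto_norm_mann_step_sub [NormedSpace ℝ E] {a β : ℕ → ℝ}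
    {b c : ℝ} (hb : b < 1) (hc : c < 1) (hac : ∀ᶠ n in atTop, a n ≤ c) (ha0 : ∀ n, 0 ≤ a n)
    (hβ : ∀ n, β n ≤ b) {x y p : ℕ → E}
    (hz : Tendsto (fun n => ‖a n • x n + (1 - a n) • (β n • y n + (1 - β n) • p n) - x n‖)
      atTop (𝓝 0))
    (hxy : Tendsto (fun n => ‖x n - y n‖) atTop (𝓝 0)) :
    Tendsto (fun n => ‖p n - y n‖) atTop (𝓝 0) := by
  refine squeeze_zero' (.of_forall fun _ => norm_nonneg _)
    (g := fun n => (‖a n • x n + (1 - a n) • (β n • y n + (1 - β n) • p n) - x n‖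
      + ‖x n - y n‖) / ((1 - c) * (1 - b))) ?_ (by simpa using (hz.add hxy).div_const _)
  filter_upwards [hac] with n han
  have hstep := mul_norm_sub_le_norm_mann_step_sub (han.trans hc.le) ((hβ n).trans hb.le)
    (x n) (y n) (p n)
  rw [le_div_iff₀ (mul_pos (by linarith) (by linarith))]
  have h1 : (1 - c) * (1 - b) ≤ (1 - a n) * (1 - β n) :=
    mul_le_mul (by linarith) (by linarith [hβ n]) (by linarith) (by linarith)
  nlinarith [mul_le_mul_of_nonneg_left h1 (norm_nonneg (p n - y n)), ha0 n,
    norm_nonneg (x n - y n)]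

def IsAsymptoticallyStrictPseudocontractive (C : Set E) (T : E → E) (κ : ℝ) (k : ℕ → ℝ) :
    Prop :=
  ∀ n, 1 ≤ n → ∀ x ∈ C, ∀ y ∈ C,
    ‖T^[n] x - T^[n] y‖ ^ 2 ≤ k n * ‖x - y‖ ^ 2 + κ * ‖(x - T^[n] x) - (y - T^[n] y)‖ ^ 2

namespace IsAsymptoticallyStrictPseudocontractive

variable {C : Set E} {T : E → E} {κ : ℝ} {k : ℕ → ℝ}

theorem norm_iterate_sub_fixedPoint_sq_le (hT : IsAsymptoticallyStrictPseudocontractive C T κ k)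
    (hk : ∀ n, 1 ≤ k n) {v : E} (hvC : v ∈ C) (hv : T v = v) (n : ℕ) {y : E} (hy : y ∈ C) :
    ‖T^[n] y - v‖ ^ 2 ≤ k n * ‖y - v‖ ^ 2 + κ * ‖y - T^[n] y‖ ^ 2 := by
  rcases Nat.eq_zero_or_pos n with rfl | hn
  · simp only [Function.iterate_zero, id_eq, sub_self, norm_zero]
    nlinarith [hk 0, sq_nonneg ‖y - v‖]
  · simpa only [Function.iterate_fixed hv, sub_self, sub_zero] using hT n hn y hy v hvC

theorem exists_lipschitz_iterate (hT : IsAsymptoticallyStrictPseudocontractive C T κ k)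
    (hκ0 : 0 ≤ κ) (hκ1 : κ < 1) (hk : BddAbove (Set.range k)) :
    ∃ L, 0 ≤ L ∧ ∀ n, 1 ≤ n → ∀ x ∈ C, ∀ y ∈ C, ‖T^[n] x - T^[n] y‖ ≤ L * ‖x - y‖ := by
  obtain ⟨K, hK⟩ := hk
  set K' := max K 0
  have hκ : 0 < 1 - κ := by linarith
  refine ⟨(1 + κ + K') / (1 - κ), ?_, fun n hn x hx y hy => ?_⟩
  · exact div_nonneg (by positivity) hκ.le
  · have htri : ‖(x - T^[n] x) - (y - T^[n] y)‖ ≤ ‖x - y‖ + ‖T^[n] x - T^[n] y‖ := by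
      rw [show (x - T^[n] x) - (y - T^[n] y) = (x - y) - (T^[n] x - T^[n] y) by abel]
      exact norm_sub_le _ _
    have hkn : k n ≤ K' := (hK ⟨n, rfl⟩).trans (le_max_left _ _)
    rw [div_mul_eq_mul_div, le_div_iff₀ hκ, mul_comm]
    refine le_mul_of_sq_le_sq_add_sq (norm_nonneg _) (norm_nonneg _) (le_max_right _ _) hκ1 ?_
    have hsq := pow_le_pow_left₀ (norm_nonneg _) htri 2
    nlinarith [hT n hn x hx y hy, mul_le_mul_of_nonneg_left hsq hκ0,
      mul_le_mul_of_nonneg_right hkn (sq_nonneg ‖x - y‖)]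

theorem tendsto_norm_sub_apply [NormedSpace ℝ E]
    (hT : IsAsymptoticallyStrictPseudocontractive C T κ k) (hTC : Set.MapsTo T C C)
    (hκ0 : 0 ≤ κ) (hκ1 : κ < 1) (hk : BddAbove (Set.range k)) {a β : ℕ → ℝ} {b c : ℝ}
    (hb : b < 1) (hc : c < 1) (hac : ∀ᶠ n in atTop, a n ≤ c) (ha0 : ∀ n, 0 ≤ a n)
    (hβ : ∀ n, β n ≤ b) {x y : ℕ → E} (hx : ∀ n, x n ∈ C) (hy : ∀ n, y n ∈ C)
    (hstep : Tendsto (fun n => ‖x (n + 1) - x n‖) atTop (𝓝 0))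
    (hxy : Tendsto (fun n => ‖x n - y n‖) atTop (𝓝 0))
    (hz : Tendsto (fun n => ‖a n • x n + (1 - a n) • (β n • y n + (1 - β n) • T^[n] (y n))
      - x n‖) atTop (𝓝 0)) :
    Tendsto (fun n => ‖x n - T (x n)‖) atTop (𝓝 0) := by
  obtain ⟨L, hL0, hL⟩ := hT.exists_lipschitz_iterate hκ0 hκ1 hk
  have hTy := tendsto_norm_sub_of_tendsto_norm_mann_step_sub hb hc hac ha0 hβ hz hxy
  exact tendsto_norm_sub_apply_of_tendsto_norm_iterate_sub hTC hL0 hL hx hstep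
    (tendsto_norm_iterate_sub_of_tendsto_norm_sub hL hx hy hxy hTy)

end IsAsymptoticallyStrictPseudocontractive

end Normed

section InnerProductSpace

variable {H : Type*} [NormedAddCommGroup H] [InnerProductSpace ℝ H]

theorem norm_smul_add_smul_sq {a b : ℝ} (hab : a + b = 1) (u w : H) :
    ‖a • u + b • w‖ ^ 2 = a * ‖u‖ ^ 2 + b * ‖w‖ ^ 2 - a * b * ‖u - w‖ ^ 2 := by
  obtain rfl := eq_sub_of_add_eq' hab
  simp only [← real_inner_self_eq_norm_sq, inner_add_left, inner_add_right, inner_sub_left,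
    inner_sub_right, real_inner_smul_left, real_inner_smul_right, real_inner_comm u w]
  ring

theorem norm_smul_add_smul_sq_le {a b : ℝ} (ha : 0 ≤ a) (hb : 0 ≤ b) (hab : a + b = 1)
    (u w : H) : ‖a • u + b • w‖ ^ 2 ≤ a * ‖u‖ ^ 2 + b * ‖w‖ ^ 2 := by
  rw [norm_smul_add_smul_sq hab]
  nlinarith [mul_nonneg (mul_nonneg ha hb) (sq_nonneg ‖u - w‖)]

theorem norm_smul_add_one_sub_smul_sub_sq_le {β κ k : ℝ} {y p v : H} (hκβ : κ ≤ β)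
    (hβ0 : 0 ≤ β) (hβ1 : β ≤ 1) (hk : 1 ≤ k)
    (hp : ‖p - v‖ ^ 2 ≤ k * ‖y - v‖ ^ 2 + κ * ‖y - p‖ ^ 2) :
    ‖β • y + (1 - β) • p - v‖ ^ 2 ≤ k * ‖y - v‖ ^ 2 := by
  rw [show β • y + (1 - β) • p - v = β • (y - v) + (1 - β) • (p - v) by module,
    norm_smul_add_smul_sq (add_sub_cancel β 1), sub_sub_sub_cancel_right]
  nlinarith [mul_le_mul_of_nonneg_left hp (sub_nonneg.2 hβ1),
    mul_nonneg (mul_nonneg hβ0 (sub_nonneg.2 hk)) (sq_nonneg ‖y - v‖),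
    mul_nonneg (mul_nonneg (sub_nonneg.2 hβ1) (sub_nonneg.2 hκβ)) (sq_nonneg ‖y - p‖)]

theorem norm_mann_step_sub_sq_le {a β κ k : ℝ} {x y p v : H} (ha0 : 0 ≤ a) (ha1 : a ≤ 1)
    (hκβ : κ ≤ β) (hβ0 : 0 ≤ β) (hβ1 : β ≤ 1) (hk : 1 ≤ k)
    (hp : ‖p - v‖ ^ 2 ≤ k * ‖y - v‖ ^ 2 + κ * ‖y - p‖ ^ 2) :
    ‖a • x + (1 - a) • (β • y + (1 - β) • p) - v‖ ^ 2
      ≤ a * ‖x - v‖ ^ 2 + (1 - a) * (k * ‖y - v‖ ^ 2) := by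
  rw [show a • x + (1 - a) • (β • y + (1 - β) • p) - v
      = a • (x - v) + (1 - a) • (β • y + (1 - β) • p - v) by module]
  refine (norm_smul_add_smul_sq_le ha0 (sub_nonneg.2 ha1) (add_sub_cancel a 1) _ _).trans ?_
  gcongr
  exact norm_smul_add_one_sub_smul_sub_sq_le hκβ hβ0 hβ1 hk hp

theorem norm_resolvent_sub_sq_le {f : H → H → ℝ} {A : H → H} {α r : ℝ} {x y v : H}
    (hr : 0 < r) (hy : 0 ≤ f y v + ⟪A x, v - y⟫ + 1 / r * ⟪v - y, y - x⟫)
    (hv : 0 ≤ f v y + ⟪A v, y - v⟫) (hf : f y v + f v y ≤ 0)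
    (hA : α * ‖A x - A v‖ ^ 2 ≤ ⟪A x - A v, x - v⟫) :
    ‖y - v‖ ^ 2 ≤ ‖x - v‖ ^ 2 - (‖x - y‖ - r * ‖A x - A v‖) ^ 2
      - r * (2 * α - r) * ‖A x - A v‖ ^ 2 := by
  set g := A x - A v
  have hmono : 0 ≤ r * ⟪g, v - y⟫ + ⟪v - y, y - x⟫ := by
    have h : 0 ≤ ⟪g, v - y⟫ + 1 / r * ⟪v - y, y - x⟫ := by
      have hAv : ⟪A v, y - v⟫ = -⟪A v, v - y⟫ := by rw [← inner_neg_right, neg_sub]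
      rw [inner_sub_left]
      linarith
    have := mul_nonneg hr.le h
    rwa [mul_add, ← mul_assoc, mul_one_div_cancel hr.ne', one_mul] at this
  have hsplit : ⟪g, v - y⟫ = ⟪g, x - y⟫ - ⟪g, x - v⟫ := by
    rw [← inner_sub_right, sub_sub_sub_cancel_left]
  have hcs : ⟪g, x - y⟫ ≤ ‖g‖ * ‖x - y‖ := real_inner_le_norm _ _
  have hpol : 2 * ⟪v - y, y - x⟫ = ‖x - v‖ ^ 2 - ‖y - v‖ ^ 2 - ‖x - y‖ ^ 2 := by
    have h := norm_add_sq_real (v - y) (y - x)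
    rw [show v - y + (y - x) = v - x by abel, norm_sub_rev v x, norm_sub_rev v y,
      norm_sub_rev y x] at h
    linarith
  nlinarith [mul_le_mul_of_nonneg_left hcs hr.le, mul_le_mul_of_nonneg_left hA hr.le]

theorem IsProjOn.inner_sub_le_zero {K : Set H} (hK : Convex ℝ K) {u p : H}
    (hp : IsProjOn K u p) {w : H} (hw : w ∈ K) : ⟪u - p, w - p⟫ ≤ 0 := by
  refine (norm_eq_iInf_iff_real_inner_le_zero hK hp.1).1 ?_ w hw
  have : Nonempty K := ⟨⟨p, hp.1⟩⟩
  have hbdd : BddBelow (Set.range fun w : K => ‖u - w‖) :=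
    ⟨0, Set.forall_mem_range.2 fun _ => norm_nonneg _⟩
  refine le_antisymm (le_ciInf fun w => ?_) (ciInf_le hbdd ⟨p, hp.1⟩)
  rw [norm_sub_rev, norm_sub_rev u]
  exact hp.2 w w.2

theorem IsProjOn.norm_sub_sq_le {K : Set H} (hK : Convex ℝ K) {u p : H}
    (hp : IsProjOn K u p) {w : H} (hw : w ∈ K) : ‖w - p‖ ^ 2 ≤ ‖w - u‖ ^ 2 - ‖p - u‖ ^ 2 := by
  have hinner : ⟪w - p, p - u⟫ = -⟪u - p, w - p⟫ := by
    rw [real_inner_comm, ← inner_neg_left, neg_sub]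
  have := hp.inner_sub_le_zero hK hw
  rw [show w - u = (w - p) + (p - u) by abel, norm_add_sq_real, hinner]
  linarith

theorem convex_setOf_norm_sub_sq_le (z x : H) (ε : ℝ) :
    Convex ℝ {v : H | ‖z - v‖ ^ 2 ≤ ‖x - v‖ ^ 2 + ε} := by
  have hset : {v : H | ‖z - v‖ ^ 2 ≤ ‖x - v‖ ^ 2 + ε} =
      {v | ⟪x - z, v⟫ ≤ (‖x‖ ^ 2 - ‖z‖ ^ 2 + ε) / 2} := by
    ext v
    simp only [Set.mem_ofPred_eq, norm_sub_sq_real, inner_sub_left]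
    constructor <;> intro h <;> linarith
  rw [hset]
  exact convex_halfSpace_le (innerₛₗ ℝ (x - z)).isLinear _

theorem cauchySeq_of_isProjOn_antitone {K : ℕ → Set H} (hK : Antitone K)
    (hconv : ∀ n, Convex ℝ (K n)) {u v : H} (hv : ∀ n, v ∈ K n) {x : ℕ → H}
    (hx : ∀ n, IsProjOn (K n) u (x n)) : CauchySeq x := by
  set s : ℕ → ℝ := fun n => ‖x n - u‖ ^ 2
  have hstep {m n : ℕ} (hnm : n ≤ m) : ‖x m - x n‖ ^ 2 ≤ s m - s n :=
    (hx n).norm_sub_sq_le (hconv n) (hK hnm (hx m).1)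
  have hmono : Monotone s := fun n m hnm => by
    linarith [hstep hnm, sq_nonneg ‖x m - x n‖]
  have hbdd : BddAbove (Set.range s) := by
    refine ⟨‖v - u‖ ^ 2, ?_⟩
    rintro _ ⟨n, rfl⟩
    exact pow_le_pow_left₀ (norm_nonneg _) ((hx n).2 v (hv n)) 2
  have hs := (tendsto_atTop_ciSup hmono hbdd).cauchySeq
  rw [Metric.cauchySeq_iff'] at hs ⊢
  intro ε hε
  obtain ⟨N, hN⟩ := hs (ε ^ 2) (by positivity)
  refine ⟨N, fun n hn => ?_⟩
  have hsN := hN n hn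
  rw [Real.dist_eq] at hsN
  rw [dist_eq_norm]
  refine lt_of_pow_lt_pow_left₀ 2 hε.le ?_
  linarith [hstep hn, le_abs_self (s n - s N)]

theorem convex_of_succ_eq_sep {K : ℕ → Set H} {z x : ℕ → H} {ε : ℕ → ℝ}
    (h0 : Convex ℝ (K 0))
    (hK : ∀ n, K (n + 1) = {v ∈ K n | ‖z n - v‖ ^ 2 ≤ ‖x n - v‖ ^ 2 + ε n}) (n : ℕ) :
    Convex ℝ (K n) := by
  induction n with
  | zero => exact h0
  | succ n ih =>
    rw [hK n]
    exact ih.inter (convex_setOf_norm_sub_sq_le (z n) (x n) (ε n))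

theorem cauchySeq_and_tendsto_norm_sub_of_shrinkingProjection {C : Set H} (hC : Convex ℝ C)
    {K : ℕ → Set H} {x z : ℕ → H} {k : ℕ → ℝ} {ω : ℝ} (hω : 0 ≤ ω) (hk1 : ∀ n, 1 ≤ k n)
    (hklim : Tendsto k atTop (𝓝 1)) (hK0 : K 0 = C)
    (hK : ∀ n, K (n + 1) =
      {v ∈ K n | ‖z n - v‖ ^ 2 ≤ ‖x n - v‖ ^ 2 + (k n - 1) * (‖x n‖ + ω) ^ 2})
    (hx0 : x 0 ∈ C) (hx : ∀ n, IsProjOn (K (n + 1)) (x 0) (x (n + 1))) {v : H}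
    (hv : ∀ n, v ∈ K n) : CauchySeq x ∧ Tendsto (fun n => ‖x n - z n‖) atTop (𝓝 0) := by
  have hcauchy : CauchySeq x := by
    refine cauchySeq_of_isProjOn_antitone (antitone_of_succ_eq_sep hK)
      (convex_of_succ_eq_sep (hK0 ▸ hC) hK) hv (u := x 0) fun n => ?_
    cases n with
    | zero => exact ⟨hK0 ▸ hx0, fun w _ => by simp⟩
    | succ n => exact hx n
  obtain ⟨B, hB⟩ := hcauchy.norm_bddAbove
  have hε : Tendsto (fun n => (k n - 1) * (‖x n‖ + ω) ^ 2) atTop (𝓝 0) := by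
    refine squeeze_zero (fun n => mul_nonneg (sub_nonneg.2 (hk1 n)) (sq_nonneg _))
      (g := fun n => (k n - 1) * (B + ω) ^ 2) (fun n => ?_) ?_
    · have hxB : ‖x n‖ ≤ B := hB ⟨n, rfl⟩
      gcongr
      linarith [hk1 n]
    · simpa using (hklim.sub_const 1).mul_const ((B + ω) ^ 2)
  refine ⟨hcauchy, hcauchy.tendsto_norm_sub_of_sq_le (fun n => ?_) hε⟩
  have h := (hx n).1
  rw [hK n] at h
  exact h.2

end InnerProductSpace

theorem algorithm1_cauchy_and_asymptotic_regularity_general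
    {H : Type*} [NormedAddCommGroup H] [InnerProductSpace ℝ H]
    (C : Set H) (hCcv : Convex ℝ C)
    (N M : ℕ)
    -- the bifunctions fᵢ satisfy (A1)-(A4)
    (f : Fin N → H → H → ℝ)
    (hfA2 : ∀ i, ∀ x ∈ C, ∀ y ∈ C, f i x y + f i y x ≤ 0)
    -- the operators Aᵢ are α-inverse strongly monotone on C
    (A : Fin N → H → H) (α : ℝ)
    (hism : ∀ i, ∀ x ∈ C, ∀ y ∈ C, α * ‖A i x - A i y‖ ^ 2 ≤ ⟪A i x - A i y, x - y⟫)
    -- the mappings Sⱼ : C → C are asymptotically κ-strictly pseudocontractive with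
    -- the same sequence {kₙ} ⊆ [1,∞), kₙ → 1
    (S : Fin M → H → H) (hS : ∀ j, Set.MapsTo (S j) C C)
    (κ : ℝ) (hκ0 : 0 ≤ κ) (hκ1 : κ < 1)
    (k : ℕ → ℝ) (hk1 : ∀ n, 1 ≤ k n)
    (hklim : Filter.Tendsto k Filter.atTop (nhds 1))
    (hasym : ∀ j, ∀ n, 1 ≤ n → ∀ x ∈ C, ∀ y ∈ C,
      ‖(S j)^[n] x - (S j)^[n] y‖ ^ 2
        ≤ k n * ‖x - y‖ ^ 2 + κ * ‖(x - (S j)^[n] x) - (y - (S j)^[n] y)‖ ^ 2)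
    -- the solution set F is nonempty and bounded by ω
    (F : Set H)
    (hF : F = {v ∈ C | ∀ i, ∀ y ∈ C, 0 ≤ f i v y + ⟪A i v, y - v⟫} ∩
      {v | ∀ j, S j v = v})
    (hFne : F.Nonempty) (ω : ℝ) (hFb : ∀ v ∈ F, ‖v‖ ≤ ω)
    -- control parameters
    (a : ℕ → ℝ) (ha0 : ∀ n, 0 < a n) (ha1 : ∀ n, a n < 1)
    (halimsup : Filter.limsup a Filter.atTop < 1)
    (β : ℕ → ℝ) (b : ℝ) (hb1 : b < 1) (hβ : ∀ n, κ ≤ β n ∧ β n ≤ b)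
    (r : ℕ → ℝ) (d e : ℝ) (hd : 0 < d) (he : e < 2 * α) (hr : ∀ n, d ≤ r n ∧ r n ≤ e)
    -- the iterates of Algorithm 1
    (x : ℕ → H) (y : ℕ → Fin N → H) (z : ℕ → Fin M → H)
    (iN : ℕ → Fin N) (jM : ℕ → Fin M) (ybar zbar : ℕ → H) (Cset : ℕ → Set H)
    (hx0 : x 0 ∈ C) (hC0 : Cset 0 = C)
    -- (i) yₙⁱ solves the regularized generalized equilibrium problem
    (hy : ∀ n i, y n i ∈ C ∧ ∀ w ∈ C,
      0 ≤ f i (y n i) w + ⟪A i (x n), w - y n i⟫ +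
        (1 / r n) * ⟪w - y n i, y n i - x n⟫)
    -- (ii) iₙ maximizes ‖yₙⁱ - xₙ‖ and ȳₙ = yₙ^{iₙ}
    (hiN : ∀ n i, ‖y n i - x n‖ ≤ ‖y n (iN n) - x n‖)
    (hybar : ∀ n, ybar n = y n (iN n))
    -- (iii) zₙʲ = αₙ xₙ + (1-αₙ)(βₙ ȳₙ + (1-βₙ) Sⱼⁿ ȳₙ)
    (hz : ∀ n j, z n j = a n • x n +
      (1 - a n) • (β n • ybar n + (1 - β n) • (S j)^[n] (ybar n)))
    -- (iv) jₙ maximizes ‖zₙʲ - xₙ‖ and z̄ₙ = zₙ^{jₙ}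
    (hjM : ∀ n j, ‖z n j - x n‖ ≤ ‖z n (jM n) - x n‖)
    (hzbar : ∀ n, zbar n = z n (jM n))
    -- (v) Cₙ₊₁ = {v ∈ Cₙ : ‖z̄ₙ - v‖² ≤ ‖xₙ - v‖² + εₙ}, εₙ = (kₙ - 1)(‖xₙ‖ + ω)²
    (hCset : ∀ n, Cset (n + 1) =
      {v ∈ Cset n | ‖zbar n - v‖ ^ 2 ≤ ‖x n - v‖ ^ 2 + (k n - 1) * (‖x n‖ + ω) ^ 2})
    -- (vi) xₙ₊₁ = P_{Cₙ₊₁} x₀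
    (hxproj : ∀ n, IsProjOn (Cset (n + 1)) (x 0) (x (n + 1))) :
    CauchySeq x ∧
      (∀ i, Filter.Tendsto (fun n => ‖x n - y n i‖) Filter.atTop (nhds 0)) ∧
      (∀ j, Filter.Tendsto (fun n => ‖x n - z n j‖) Filter.atTop (nhds 0)) ∧
      (∀ j, Filter.Tendsto (fun n => ‖x n - S j (x n)‖) Filter.atTop (nhds 0)) := by
  obtain ⟨v, hvF⟩ := hFne
  have hvω := hFb v hvF
  obtain ⟨⟨hvC, hvGEP⟩, hvS⟩ : _ ∧ _ := hF ▸ hvF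
  have hSj : ∀ j, IsAsymptoticallyStrictPseudocontractive C (S j) κ k := hasym
  have hr0 n : 0 < r n := hd.trans_le (hr n).1
  have hxC n : x n ∈ C := by
    cases n with
    | zero => exact hx0
    | succ n => exact hC0 ▸ antitone_of_succ_eq_sep hCset (Nat.zero_le _) (hxproj n).1
  have hybarC n : ybar n ∈ C := hybar n ▸ (hy n _).1
  have hyv n i := norm_resolvent_sub_sq_le (hr0 n) ((hy n i).2 v hvC) (hvGEP i _ (hy n i).1)
    (hfA2 i _ (hy n i).1 v hvC) (hism i _ (hxC n) v hvC)
  have hybv n : ‖ybar n - v‖ ^ 2 ≤ ‖x n - v‖ ^ 2 := by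
    rw [hybar n]
    nlinarith [hyv n (iN n), mul_nonneg (mul_nonneg (hr0 n).le (by linarith [(hr n).2] :
      0 ≤ 2 * α - r n)) (sq_nonneg ‖A (iN n) (x n) - A (iN n) v‖)]
  have hzv n :
      ‖zbar n - v‖ ^ 2 ≤ a n * ‖x n - v‖ ^ 2 + (1 - a n) * (k n * ‖ybar n - v‖ ^ 2) := by
    rw [hzbar n, hz]
    exact norm_mann_step_sub_sq_le (ha0 n).le (ha1 n).le (hβ n).1 (hκ0.trans (hβ n).1)
      ((hβ n).2.trans hb1.le) (hk1 n)
      ((hSj (jM n)).norm_iterate_sub_fixedPoint_sq_le hk1 hvC (hvS _) n (hybarC n))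
  have hvCset n : v ∈ Cset n := by
    induction n with
    | zero => exact hC0 ▸ hvC
    | succ n ih =>
      rw [hCset n]
      refine ⟨ih, le_add_sub_one_mul_of_le_mul_add_mul (ha0 n).le (ha1 n).le (hk1 n)
        (sq_nonneg _) (hybv n) (pow_le_pow_left₀ (norm_nonneg _) ?_ 2) (hzv n)⟩
      exact (norm_sub_le _ _).trans (by linarith)
  obtain ⟨hcauchy, hxz⟩ := cauchySeq_and_tendsto_norm_sub_of_shrinkingProjection hCcv
    ((norm_nonneg v).trans hvω) hk1 hklim hC0 hCset hx0 hxproj hvCset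
  obtain ⟨B, hB⟩ := hcauchy.norm_bddAbove
  have hxv n : ‖x n - v‖ ≤ B + ω := (norm_sub_le _ _).trans (add_le_add (hB ⟨n, rfl⟩) hvω)
  obtain ⟨c, hac, hc⟩ := exists_between halimsup
  have hac' : ∀ᶠ n in atTop, a n ≤ c :=
    (eventually_lt_of_limsup_lt hac
      ⟨1, eventually_map.2 (.of_forall fun n => (ha1 n).le)⟩).mono fun _ => le_of_lt
  have hP : Tendsto (fun n => ‖x n - v‖ ^ 2 - ‖ybar n - v‖ ^ 2) atTop (𝓝 0) :=
    tendsto_sub_of_le_mul_add_mul hc hac' (fun n => (ha0 n).le) hk1 hklim (fun _ => sq_nonneg _)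
      hybv (fun n => (hybv n).trans (pow_le_pow_left₀ (norm_nonneg _) (hxv n) 2)) hzv
      (tendsto_norm_sq_sub_norm_sq (w := fun n => zbar n - v) hxv
        (by simpa only [sub_sub_sub_cancel_right] using hxz))
  have hxy : Tendsto (fun n => ‖x n - ybar n‖) atTop (𝓝 0) := by
    refine tendsto_zero_of_sq_le (fun _ => norm_nonneg _) (fun n => ?_)
      (by simpa using hP.const_mul (2 * (1 + e ^ 2 / (d * (2 * α - e)))))
    refine sq_le_mul_of_sq_sub_mul_add_le (g := ‖A (iN n) (x n) - A (iN n) v‖) hd (hr n).1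
      (hr n).2 he ?_
    rw [hybar n]
    linarith [hyv n (iN n)]
  have hxzj j : Tendsto (fun n => ‖z n j - x n‖) atTop (𝓝 0) :=
    squeeze_zero (fun _ => norm_nonneg _)
      (fun n => by rw [norm_sub_rev (x n), hzbar n]; exact hjM n j) hxz
  refine ⟨hcauchy, fun i => ?_, fun j => by simpa only [norm_sub_rev] using hxzj j, fun j => ?_⟩
  · exact squeeze_zero (fun _ => norm_nonneg _)
      (fun n => by rw [norm_sub_rev, hybar n, norm_sub_rev (x n)]; exact hiN n i) hxy
  · exact (hSj j).tendsto_norm_sub_apply (hS j) hκ0 hκ1 hklim.bddAbove_range hb1 hc hac'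
      (fun n => (ha0 n).le) (fun n => (hβ n).2) hxC hybarC hcauchy.tendsto_norm_succ_sub hxy
      (by simpa only [hz] using hxzj j)

/-- **Lemma 3.2.** For the sequences generated by Algorithm 1, `{xₙ}` is a
Cauchy sequence and `‖xₙ - yₙⁱ‖ → 0`, `‖xₙ - zₙʲ‖ → 0`, `‖xₙ - Sⱼ xₙ‖ → 0` for all
`i = 1,…,N` and `j = 1,…,M`. -/
theorem algorithm1_cauchy_and_asymptotic_regularity
    {H : Type*} [NormedAddCommGroup H] [InnerProductSpace ℝ H] [CompleteSpace H]
    (C : Set H) (hCne : C.Nonempty) (hCcl : IsClosed C) (hCcv : Convex ℝ C)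
    (N M : ℕ) (hN : 0 < N) (hM : 0 < M)
    -- the bifunctions fᵢ satisfy (A1)-(A4)
    (f : Fin N → H → H → ℝ)
    (hfA1 : ∀ i, ∀ x ∈ C, f i x x = 0)
    (hfA2 : ∀ i, ∀ x ∈ C, ∀ y ∈ C, f i x y + f i y x ≤ 0)
    (hfA3 : ∀ i, ∀ x ∈ C, ∀ y ∈ C, ∀ z ∈ C,
      Filter.limsup (fun t : ℝ => f i (t • z + (1 - t) • x) y) (nhdsWithin 0 (Set.Ioi 0))
        ≤ f i x y)
    (hfA4conv : ∀ i, ∀ x ∈ C, ConvexOn ℝ C (f i x))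
    (hfA4lsc : ∀ i, ∀ x ∈ C, LowerSemicontinuousOn (f i x) C)
    -- the operators Aᵢ are α-inverse strongly monotone on C
    (A : Fin N → H → H) (α : ℝ) (hα : 0 < α)
    (hism : ∀ i, ∀ x ∈ C, ∀ y ∈ C, α * ‖A i x - A i y‖ ^ 2 ≤ ⟪A i x - A i y, x - y⟫)
    -- the mappings Sⱼ : C → C are asymptotically κ-strictly pseudocontractive with
    -- the same sequence {kₙ} ⊆ [1,∞), kₙ → 1
    (S : Fin M → H → H) (hS : ∀ j, Set.MapsTo (S j) C C)
    (κ : ℝ) (hκ0 : 0 ≤ κ) (hκ1 : κ < 1)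
    (k : ℕ → ℝ) (hk1 : ∀ n, 1 ≤ k n)
    (hklim : Filter.Tendsto k Filter.atTop (nhds 1))
    (hasym : ∀ j, ∀ n, 1 ≤ n → ∀ x ∈ C, ∀ y ∈ C,
      ‖(S j)^[n] x - (S j)^[n] y‖ ^ 2
        ≤ k n * ‖x - y‖ ^ 2 + κ * ‖(x - (S j)^[n] x) - (y - (S j)^[n] y)‖ ^ 2)
    -- the solution set F is nonempty and bounded by ω
    (F : Set H)
    (hF : F = {v ∈ C | ∀ i, ∀ y ∈ C, 0 ≤ f i v y + ⟪A i v, y - v⟫} ∩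
      {v | ∀ j, S j v = v})
    (hFne : F.Nonempty) (ω : ℝ) (hω : 0 < ω) (hFb : ∀ v ∈ F, ‖v‖ ≤ ω)
    -- control parameters
    (a : ℕ → ℝ) (ha0 : ∀ n, 0 < a n) (ha1 : ∀ n, a n < 1)
    (halimsup : Filter.limsup a Filter.atTop < 1)
    (β : ℕ → ℝ) (b : ℝ) (hbκ : κ < b) (hb1 : b < 1) (hβ : ∀ n, κ ≤ β n ∧ β n ≤ b)
    (r : ℕ → ℝ) (d e : ℝ) (hd : 0 < d) (he : e < 2 * α) (hr : ∀ n, d ≤ r n ∧ r n ≤ e)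
    -- the iterates of Algorithm 1
    (x : ℕ → H) (y : ℕ → Fin N → H) (z : ℕ → Fin M → H)
    (iN : ℕ → Fin N) (jM : ℕ → Fin M) (ybar zbar : ℕ → H) (Cset : ℕ → Set H)
    (hx0 : x 0 ∈ C) (hC0 : Cset 0 = C)
    -- (i) yₙⁱ solves the regularized generalized equilibrium problem
    (hy : ∀ n i, y n i ∈ C ∧ ∀ w ∈ C,
      0 ≤ f i (y n i) w + ⟪A i (x n), w - y n i⟫ +
        (1 / r n) * ⟪w - y n i, y n i - x n⟫)
    -- (ii) iₙ maximizes ‖yₙⁱ - xₙ‖ and ȳₙ = yₙ^{iₙ}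
    (hiN : ∀ n i, ‖y n i - x n‖ ≤ ‖y n (iN n) - x n‖)
    (hybar : ∀ n, ybar n = y n (iN n))
    -- (iii) zₙʲ = αₙ xₙ + (1-αₙ)(βₙ ȳₙ + (1-βₙ) Sⱼⁿ ȳₙ)
    (hz : ∀ n j, z n j = a n • x n +
      (1 - a n) • (β n • ybar n + (1 - β n) • (S j)^[n] (ybar n)))
    -- (iv) jₙ maximizes ‖zₙʲ - xₙ‖ and z̄ₙ = zₙ^{jₙ}
    (hjM : ∀ n j, ‖z n j - x n‖ ≤ ‖z n (jM n) - x n‖)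
    (hzbar : ∀ n, zbar n = z n (jM n))
    -- (v) Cₙ₊₁ = {v ∈ Cₙ : ‖z̄ₙ - v‖² ≤ ‖xₙ - v‖² + εₙ}, εₙ = (kₙ - 1)(‖xₙ‖ + ω)²
    (hCset : ∀ n, Cset (n + 1) =
      {v ∈ Cset n | ‖zbar n - v‖ ^ 2 ≤ ‖x n - v‖ ^ 2 + (k n - 1) * (‖x n‖ + ω) ^ 2})
    -- (vi) xₙ₊₁ = P_{Cₙ₊₁} x₀
    (hxproj : ∀ n, IsProjOn (Cset (n + 1)) (x 0) (x (n + 1))) :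
    CauchySeq x ∧
      (∀ i, Filter.Tendsto (fun n => ‖x n - y n i‖) Filter.atTop (nhds 0)) ∧
      (∀ j, Filter.Tendsto (fun n => ‖x n - z n j‖) Filter.atTop (nhds 0)) ∧
      (∀ j, Filter.Tendsto (fun n => ‖x n - S j (x n)‖) Filter.atTop (nhds 0)) :=
  algorithm1_cauchy_and_asymptotic_regularity_general C hCcv N M f hfA2 A α hism S hS κ hκ0 hκ1 k
    hk1 hklim hasym F hF hFne ω hFb a ha0 ha1 halimsup β b hb1 hβ r d e hd he hr x y z iN jM ybar
    zbar Cset hx0 hC0 hy hiN hybar hz hjM hzbar hCset hxproj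
end

section
/- Let H be a real Hilbert space and C ⊆ H nonempty closed convex. Suppose each f_i (i = 1,…,N) satisfies (A1)–(A4), each A_i : C → H is α-inverse strongly monotone, and each S_j : C → C (j = 1,…,M) is κ-strictly pseudocontractive; assume F = (∩_{i=1}^N GEP(f_i, A_i)) ∩ (∩_{j=1}^M F(S_j)) is nonempty. Let parameters satisfy 0 < α_n < 1 with limsup α_n < 1, κ ≤ β_n ≤ b < 1 for some b ∈ (κ,1), and 0 < d ≤ r_n ≤ e < 2α. Let x_0 ∈ C, C_0 = C, and for n ≥ 0: y_n^i ∈ C satisfies f_i(y_n^i, y) + ⟨A_i x_n, y − y_n^i⟩ + (1/r_n)⟨y − y_n^i, y_n^i − x_n⟩ ≥ 0 for all y ∈ C; i_n maximizes ‖y_n^i − x_n‖ and ȳ_n = y_n^{i_n}; z_n^j = α_n x_n + (1−α_n)(β_n ȳ_n + (1−β_n) S_j ȳ_n); j_n maximizes ‖z_n^j − x_n‖ and z̄_n = z_n^{j_n}; C_{n+1} = {v ∈ C_n : ‖z̄_n − v‖ ≤ ‖x_n − v‖}; x_{n+1} = P_{C_{n+1}} x_0. Then the sequences {x_n}, {y_n^i},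 {z_n^j} converge strongly to P_F x_0. (No boundedness assumption on F is needed.) -/
open scoped RealInnerProductSpace
open Filter Topology

section Aux
variable {H : Type*} [NormedAddCommGroup H] [InnerProductSpace ℝ H]

lemma aux_norm_comb (t : ℝ) (u v : H) :
    ‖t • u + (1 - t) • v‖ ^ 2
      = t * ‖u‖ ^ 2 + (1 - t) * ‖v‖ ^ 2 - t * (1 - t) * ‖u - v‖ ^ 2 := by
  have h : ∀ w : H, ‖w‖ ^ 2 = ⟪w, w⟫ := fun w => (real_inner_self_eq_norm_sq w).symm
  rw [h, h, h, h]
  simp only [inner_add_add_self, inner_sub_sub_self, real_inner_smul_left,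
    real_inner_smul_right, real_inner_comm u v]
  ring

lemma aux_tendsto_of_sq {g : ℕ → ℝ} (h : Filter.Tendsto (fun n => g n ^ 2) Filter.atTop (𝓝 0))
    (hg : ∀ n, 0 ≤ g n) : Filter.Tendsto g Filter.atTop (𝓝 0) := by
  have := (Real.continuous_sqrt.tendsto 0).comp h
  simp only [Function.comp, Real.sqrt_zero] at this
  refine this.congr fun n => ?_
  simp [Real.sqrt_sq (hg n)]

lemma aux_sq_le {s t : ℝ} (h : s ^ 2 ≤ t ^ 2) (hs : 0 ≤ s) (ht : 0 ≤ t) : s ≤ t := by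
  nlinarith [sq_nonneg (s + t), sq_nonneg (s - t)]

lemma proj_varineq {K : Set H} (hK : Convex ℝ K) {x p : H} (h : IsProjOn K x p) :
    ∀ v ∈ K, ⟪x - p, v - p⟫ ≤ 0 := by
  intro v hv
  have key : ∀ t : ℝ, 0 < t → t ≤ 1 → 0 ≤ 2 * ⟪p - x, v - p⟫ + t * ‖v - p‖ ^ 2 := by
    intro t ht0 ht1
    have hmem : p + t • (v - p) ∈ K := by
      have := hK h.1 hv (by linarith : (0:ℝ) ≤ 1 - t) ht0.le (by ring)
      convert this using 1
      module
    have hle := h.2 _ hmem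
    have hsq : ‖p - x‖ ^ 2 ≤ ‖p + t • (v - p) - x‖ ^ 2 := by
      have := h.2 _ hmem
      nlinarith [norm_nonneg (p - x), norm_nonneg (p + t • (v - p) - x)]
    have hexp : ‖p + t • (v - p) - x‖ ^ 2
        = ‖p - x‖ ^ 2 + 2 * (t * ⟪p - x, v - p⟫) + t ^ 2 * ‖v - p‖ ^ 2 := by
      have h1 : p + t • (v - p) - x = (p - x) + t • (v - p) := by abel
      rw [h1, norm_add_sq_real, real_inner_smul_right, norm_smul]
      simp [abs_of_pos ht0]
      ring
    nlinarith [hsq, hexp, sq_nonneg t]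
  have h2 : (0:ℝ) ≤ 2 * ⟪p - x, v - p⟫ := by
    have htend : Filter.Tendsto (fun t : ℝ => 2 * ⟪p - x, v - p⟫ + t * ‖v - p‖ ^ 2)
        (𝓝[>] (0:ℝ)) (𝓝 (2 * ⟪p - x, v - p⟫)) := by
      have : Filter.Tendsto (fun t : ℝ => 2 * ⟪p - x, v - p⟫ + t * ‖v - p‖ ^ 2)
          (𝓝 (0:ℝ)) (𝓝 (2 * ⟪p - x, v - p⟫ + 0 * ‖v - p‖ ^ 2)) := by
        exact (tendsto_const_nhds.add ((tendsto_id).mul_const _))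
      simpa using this.mono_left nhdsWithin_le_nhds
    refine ge_of_tendsto htend ?_
    filter_upwards [Ioc_mem_nhdsGT_of_mem (Set.left_mem_Ico.2 zero_lt_one)] with t ht
    exact key t ht.1 ht.2
  have : ⟪x - p, v - p⟫ = - ⟪p - x, v - p⟫ := by
    rw [show x - p = -(p - x) by abel, inner_neg_left]
  linarith

lemma proj_sq {K : Set H} (hK : Convex ℝ K) {x p : H} (h : IsProjOn K x p) :
    ∀ v ∈ K, ‖p - x‖ ^ 2 + ‖v - p‖ ^ 2 ≤ ‖v - x‖ ^ 2 := by
  intro v hv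
  have hvi := proj_varineq hK h v hv
  have hexp : ‖v - x‖ ^ 2 = ‖v - p‖ ^ 2 + 2 * ⟪v - p, p - x⟫ + ‖p - x‖ ^ 2 := by
    have h1 : v - x = (v - p) + (p - x) := by abel
    rw [h1, norm_add_sq_real]
  have : ⟪v - p, p - x⟫ = - ⟪x - p, v - p⟫ := by
    rw [real_inner_comm, show p - x = -(x - p) by abel, inner_neg_left]
  linarith

end Aux

set_option maxHeartbeats 4000000 in
/-- **Theorem 3.2.** Strong convergence of the parallel hybrid Algorithm 2
for generalized equilibrium problems and κ-strictly pseudocontractive mappings; no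
boundedness assumption on the solution set `F` is needed. -/
theorem algorithm2_strong_convergence
    {H : Type*} [NormedAddCommGroup H] [InnerProductSpace ℝ H] [CompleteSpace H]
    (C : Set H) (hCne : C.Nonempty) (hCcl : IsClosed C) (hCcv : Convex ℝ C)
    (N M : ℕ) (hN : 0 < N) (hM : 0 < M)
    -- the bifunctions fᵢ satisfy (A1)-(A4)
    (f : Fin N → H → H → ℝ)
    (hfA1 : ∀ i, ∀ x ∈ C, f i x x = 0)
    (hfA2 : ∀ i, ∀ x ∈ C, ∀ y ∈ C, f i x y + f i y x ≤ 0)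
    (hfA3 : ∀ i, ∀ x ∈ C, ∀ y ∈ C, ∀ z ∈ C,
      Filter.limsup (fun t : ℝ => f i (t • z + (1 - t) • x) y) (nhdsWithin 0 (Set.Ioi 0))
        ≤ f i x y)
    (hfA4conv : ∀ i, ∀ x ∈ C, ConvexOn ℝ C (f i x))
    (hfA4lsc : ∀ i, ∀ x ∈ C, LowerSemicontinuousOn (f i x) C)
    -- the operators Aᵢ are α-inverse strongly monotone on C
    (A : Fin N → H → H) (α : ℝ) (hα : 0 < α)
    (hism : ∀ i, ∀ x ∈ C, ∀ y ∈ C, α * ‖A i x - A i y‖ ^ 2 ≤ ⟪A i x - A i y, x - y⟫)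
    -- the mappings Sⱼ : C → C are κ-strictly pseudocontractive
    (S : Fin M → H → H) (hS : ∀ j, Set.MapsTo (S j) C C)
    (κ : ℝ) (hκ0 : 0 ≤ κ) (hκ1 : κ < 1)
    (hpseudo : ∀ j, ∀ x ∈ C, ∀ y ∈ C,
      ‖S j x - S j y‖ ^ 2 ≤ ‖x - y‖ ^ 2 + κ * ‖(x - S j x) - (y - S j y)‖ ^ 2)
    -- the solution set F is nonempty
    (F : Set H)
    (hF : F = {v ∈ C | ∀ i, ∀ y ∈ C, 0 ≤ f i v y + ⟪A i v, y - v⟫} ∩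
      {v | ∀ j, S j v = v})
    (hFne : F.Nonempty)
    -- control parameters
    (a : ℕ → ℝ) (ha0 : ∀ n, 0 < a n) (ha1 : ∀ n, a n < 1)
    (halimsup : Filter.limsup a Filter.atTop < 1)
    (β : ℕ → ℝ) (b : ℝ) (hbκ : κ < b) (hb1 : b < 1) (hβ : ∀ n, κ ≤ β n ∧ β n ≤ b)
    (r : ℕ → ℝ) (d e : ℝ) (hd : 0 < d) (he : e < 2 * α) (hr : ∀ n, d ≤ r n ∧ r n ≤ e)
    -- the iterates of Algorithm 1
    (x : ℕ → H) (y : ℕ → Fin N → H) (z : ℕ → Fin M → H)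
    (iN : ℕ → Fin N) (jM : ℕ → Fin M) (ybar zbar : ℕ → H) (Cset : ℕ → Set H)
    (hx0 : x 0 ∈ C) (hC0 : Cset 0 = C)
    -- (i) yₙⁱ solves the regularized generalized equilibrium problem
    (hy : ∀ n i, y n i ∈ C ∧ ∀ w ∈ C,
      0 ≤ f i (y n i) w + ⟪A i (x n), w - y n i⟫ +
        (1 / r n) * ⟪w - y n i, y n i - x n⟫)
    -- (ii) iₙ maximizes ‖yₙⁱ - xₙ‖ and ȳₙ = yₙ^{iₙ}
    (hiN : ∀ n i, ‖y n i - x n‖ ≤ ‖y n (iN n) - x n‖)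
    (hybar : ∀ n, ybar n = y n (iN n))
    -- (iii) zₙʲ = αₙ xₙ + (1-αₙ)(βₙ ȳₙ + (1-βₙ) Sⱼ ȳₙ)
    (hz : ∀ n j, z n j = a n • x n +
      (1 - a n) • (β n • ybar n + (1 - β n) • S j (ybar n)))
    -- (iv) jₙ maximizes ‖zₙʲ - xₙ‖ and z̄ₙ = zₙ^{jₙ}
    (hjM : ∀ n j, ‖z n j - x n‖ ≤ ‖z n (jM n) - x n‖)
    (hzbar : ∀ n, zbar n = z n (jM n))
    -- (v) Cₙ₊₁ = {v ∈ Cₙ : ‖z̄ₙ - v‖ ≤ ‖xₙ - v‖}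
    (hCset : ∀ n, Cset (n + 1) = {v ∈ Cset n | ‖zbar n - v‖ ≤ ‖x n - v‖})
    -- (vi) xₙ₊₁ = P_{Cₙ₊₁} x₀
    (hxproj : ∀ n, IsProjOn (Cset (n + 1)) (x 0) (x (n + 1))) :
    ∃ p, IsProjOn F (x 0) p ∧
      Filter.Tendsto x Filter.atTop (nhds p) ∧
      (∀ i, Filter.Tendsto (fun n => y n i) Filter.atTop (nhds p)) ∧
      (∀ j, Filter.Tendsto (fun n => z n j) Filter.atTop (nhds p)) := by
  classical
  obtain ⟨p, hpF⟩ := hFne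
  have hFmem : ∀ v ∈ F, v ∈ C ∧ (∀ i, ∀ w ∈ C, 0 ≤ f i v w + ⟪A i v, w - v⟫) ∧
      (∀ j, S j v = v) := by
    rw [hF]; rintro v ⟨⟨h1, h2⟩, h3⟩; exact ⟨h1, h2, h3⟩
  obtain ⟨hpC, hpGEP, hpfix⟩ := hFmem p hpF
  have hr0 : ∀ n, 0 < r n := fun n => lt_of_lt_of_le hd (hr n).1
  have hyC : ∀ n i, y n i ∈ C := fun n i => (hy n i).1
  have hybC : ∀ n, ybar n ∈ C := fun n => by rw [hybar]; exact hyC n (iN n)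
  have hCsub1 : ∀ n, Cset (n + 1) ⊆ Cset n := by
    intro n; rw [hCset]; exact fun v hv => hv.1
  have hCsubC : ∀ n, Cset n ⊆ C := by
    intro n; induction n with
    | zero => rw [hC0]
    | succ k ih => exact (hCsub1 k).trans ih
  have hxCset : ∀ m, x m ∈ Cset m := by
    intro m; cases m with
    | zero => rw [hC0]; exact hx0
    | succ k => exact (hxproj k).1
  have hxC : ∀ n, x n ∈ C := fun n => hCsubC n (hxCset n)
  -- resolvent estimates
  have hyv : ∀ v ∈ F, ∀ n, ∀ i, ‖y n i - v‖ ^ 2 ≤ ‖x n - v‖ ^ 2 - ‖y n i - x n‖ ^ 2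
      + 2 * r n * (‖A i (x n) - A i v‖ * ‖y n i - x n‖)
      - 2 * r n * α * ‖A i (x n) - A i v‖ ^ 2 := by
    intro v hv n i
    obtain ⟨hvC, hvG, _⟩ := hFmem v hv
    have h1 := (hy n i).2 v hvC
    have h2 := hvG i (y n i) (hyC n i)
    have h3 := hfA2 i (y n i) (hyC n i) v hvC
    have hXY : ⟪A i (x n) - A i v, y n i - v⟫ ≤ (1 / r n) * ⟪v - y n i, y n i - x n⟫ := by
      have e1 : ⟪A i (x n), v - y n i⟫ = - ⟪A i (x n), y n i - v⟫ := by
        rw [show v - y n i = -(y n i - v) by abel, inner_neg_right]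
      have e3 : ⟪A i (x n) - A i v, y n i - v⟫
          = ⟪A i (x n), y n i - v⟫ - ⟪A i v, y n i - v⟫ := inner_sub_left _ _ _
      linarith
    have hX : r n * ⟪A i (x n) - A i v, y n i - v⟫ ≤ ⟪v - y n i, y n i - x n⟫ := by
      have h4 := mul_le_mul_of_nonneg_left hXY (hr0 n).le
      rwa [← mul_assoc, mul_one_div_cancel (ne_of_gt (hr0 n)), one_mul] at h4
    have hpol : ‖v - x n‖ ^ 2
        = ‖v - y n i‖ ^ 2 + 2 * ⟪v - y n i, y n i - x n⟫ + ‖y n i - x n‖ ^ 2 := by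
      have h4 : v - x n = (v - y n i) + (y n i - x n) := by abel
      rw [h4, norm_add_sq_real]
    have hdec : r n * ⟪A i (x n) - A i v, y n i - v⟫
        = r n * (⟪A i (x n) - A i v, y n i - x n⟫ + ⟪A i (x n) - A i v, x n - v⟫) := by
      congr 1
      rw [← inner_add_right]
      congr 1
      abel
    have hISM := hism i (x n) (hxC n) v hvC
    have hCS : -(‖A i (x n) - A i v‖ * ‖y n i - x n‖) ≤ ⟪A i (x n) - A i v, y n i - x n⟫ := by
      have h5 := abs_real_inner_le_norm (A i (x n) - A i v) (y n i - x n)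
      have h6 := neg_abs_le ⟪A i (x n) - A i v, y n i - x n⟫
      linarith
    have hnrev : ‖y n i - v‖ = ‖v - y n i‖ := norm_sub_rev _ _
    have hnrev2 : ‖x n - v‖ = ‖v - x n‖ := norm_sub_rev _ _
    rw [hnrev, hnrev2]
    have hCS2 := mul_le_mul_of_nonneg_left hCS (by linarith [hr0 n] : (0:ℝ) ≤ 2 * r n)
    have hISM2 := mul_le_mul_of_nonneg_left hISM (by linarith [hr0 n] : (0:ℝ) ≤ 2 * r n)
    nlinarith [hX, hpol, hdec, hCS2, hISM2]
  have hyv2 : ∀ v ∈ F, ∀ n i, ‖y n i - v‖ ^ 2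
      ≤ ‖x n - v‖ ^ 2 + r n * (r n - 2 * α) * ‖A i (x n) - A i v‖ ^ 2 := by
    intro v hv n i
    have h := hyv v hv n i
    nlinarith [sq_nonneg (‖y n i - x n‖ - r n * ‖A i (x n) - A i v‖)]
  have hyv3 : ∀ v ∈ F, ∀ n i, ‖y n i - v‖ ≤ ‖x n - v‖ := by
    intro v hv n i
    have h := hyv2 v hv n i
    have hneg : r n * (r n - 2 * α) * ‖A i (x n) - A i v‖ ^ 2 ≤ 0 := by
      apply mul_nonpos_of_nonpos_of_nonneg _ (sq_nonneg _)
      apply mul_nonpos_of_nonneg_of_nonpos (hr0 n).le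
      linarith [(hr n).2]
    exact aux_sq_le (by linarith) (norm_nonneg _) (norm_nonneg _)
  -- pseudocontraction estimates
  have hTest : ∀ v ∈ F, ∀ n j, ∀ u ∈ C,
      ‖β n • u + (1 - β n) • S j u - v‖ ^ 2 ≤ ‖u - v‖ ^ 2 := by
    intro v hv n j u huC
    obtain ⟨hvC, _, hvfix⟩ := hFmem v hv
    have hps' : ‖S j u - v‖ ^ 2 ≤ ‖u - v‖ ^ 2 + κ * ‖u - S j u‖ ^ 2 := by
      have hps := hpseudo j u huC v hvC
      rw [hvfix j] at hps
      simpa using hps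
    have hco : β n • u + (1 - β n) • S j u - v = β n • (u - v) + (1 - β n) • (S j u - v) := by
      module
    rw [hco, aux_norm_comb]
    have hsub : (u - v) - (S j u - v) = u - S j u := by abel
    rw [hsub]
    have hb1 := (hβ n).1
    have hb2 := (hβ n).2
    have e1 : (0:ℝ) ≤ 1 - β n := by linarith
    have e2 := mul_le_mul_of_nonneg_left hps' e1
    have e3 : 0 ≤ (1 - β n) * (β n - κ) * ‖u - S j u‖ ^ 2 :=
      mul_nonneg (mul_nonneg e1 (by linarith)) (sq_nonneg _)
    nlinarith [e2, e3]
  have hzv : ∀ v ∈ F, ∀ n j, ‖z n j - v‖ ^ 2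
      ≤ a n * ‖x n - v‖ ^ 2 + (1 - a n) * ‖ybar n - v‖ ^ 2 := by
    intro v hv n j
    have hco : z n j - v = a n • (x n - v)
        + (1 - a n) • ((β n • ybar n + (1 - β n) • S j (ybar n)) - v) := by
      rw [hz]; module
    rw [hco, aux_norm_comb]
    have hT := hTest v hv n j (ybar n) (hybC n)
    have e1 : (0:ℝ) ≤ 1 - a n := by linarith [ha1 n]
    have e0 : (0:ℝ) ≤ a n := (ha0 n).le
    have e2 := mul_le_mul_of_nonneg_left hT e1
    have e3 : 0 ≤ a n * (1 - a n)
        * ‖(x n - v) - ((β n • ybar n + (1 - β n) • S j (ybar n)) - v)‖ ^ 2 :=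
      mul_nonneg (mul_nonneg e0 e1) (sq_nonneg _)
    nlinarith [e2, e3]
  have hzv2 : ∀ v ∈ F, ∀ n j, ‖z n j - v‖ ≤ ‖x n - v‖ := by
    intro v hv n j
    have h1 := hzv v hv n j
    have h2' : ‖ybar n - v‖ ^ 2 ≤ ‖x n - v‖ ^ 2 := by
      rw [hybar]; exact pow_le_pow_left₀ (norm_nonneg _) (hyv3 v hv n (iN n)) 2
    refine aux_sq_le ?_ (norm_nonneg _) (norm_nonneg _)
    have e1 : (0:ℝ) ≤ 1 - a n := by linarith [ha1 n]
    nlinarith [mul_le_mul_of_nonneg_left h2' e1]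
  have hFsub : ∀ n, F ⊆ Cset n := by
    intro n
    induction n with
    | zero => rw [hC0]; exact fun v hv => (hFmem v hv).1
    | succ k ih =>
      rw [hCset]
      intro v hv
      refine ⟨ih hv, ?_⟩
      rw [hzbar]
      exact hzv2 v hv k (jM k)
  -- convexity of the Cset's
  have hhalf : ∀ (w xx : H), Convex ℝ {v : H | ‖w - v‖ ≤ ‖xx - v‖} := by
    intro w xx
    have hiff : ∀ v : H, ‖w - v‖ ≤ ‖xx - v‖ ↔ ‖w‖ ^ 2 - ‖xx‖ ^ 2 ≤ 2 * ⟪w - xx, v⟫ := by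
      intro v
      have h1 : ‖w - v‖ ≤ ‖xx - v‖ ↔ ‖w - v‖ ^ 2 ≤ ‖xx - v‖ ^ 2 := by
        constructor
        · intro h; exact pow_le_pow_left₀ (norm_nonneg _) h 2
        · intro h; exact aux_sq_le h (norm_nonneg _) (norm_nonneg _)
      rw [h1, norm_sub_sq_real, norm_sub_sq_real, inner_sub_left]
      constructor <;> intro <;> linarith
    intro v1 hv1 v2 hv2 s t hs ht hst
    simp only [Set.mem_setOf_eq, hiff] at hv1 hv2 ⊢
    rw [inner_add_right, real_inner_smul_right, real_inner_smul_right]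
    have ht' : t = 1 - s := by linarith
    subst ht'
    linarith [mul_le_mul_of_nonneg_left hv1 hs, mul_le_mul_of_nonneg_left hv2 ht]
  have hCconv : ∀ n, Convex ℝ (Cset n) := by
    intro n; induction n with
    | zero => rw [hC0]; exact hCcv
    | succ k ih =>
      rw [hCset]
      exact ih.inter (hhalf (zbar k) (x k))
  have hchain : ∀ {n m : ℕ}, n ≤ m → Cset m ⊆ Cset n := by
    intro n m h
    induction h with
    | refl => exact subset_rfl
    | @step m h ih => exact (hCsub1 m).trans ih
  -- monotonicity of ‖x n - x 0‖ and Cauchy property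
  have hLkey : ∀ {n m : ℕ}, n ≤ m →
      ‖x n - x 0‖ ^ 2 + ‖x m - x n‖ ^ 2 ≤ ‖x m - x 0‖ ^ 2 := by
    intro n m hnm
    cases n with
    | zero => simp
    | succ k =>
      have hx_m : x m ∈ Cset (k + 1) := hchain hnm (hxCset m)
      have h := proj_sq (hCconv (k + 1)) (hxproj k) (x m) hx_m
      linarith
  have hLmono : Monotone (fun n => ‖x n - x 0‖ ^ 2) := by
    intro n m h
    have h1 := hLkey h
    simp only
    nlinarith [sq_nonneg ‖x m - x n‖]
  have hLbdd : ∀ n, ‖x n - x 0‖ ^ 2 ≤ ‖p - x 0‖ ^ 2 := by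
    intro n
    cases n with
    | zero => simp
    | succ k =>
      have hmin := (hxproj k).2 p (hFsub (k + 1) hpF)
      exact pow_le_pow_left₀ (norm_nonneg _) hmin 2
  obtain ⟨ℓ, hLlim⟩ : ∃ ℓ, Tendsto (fun n => ‖x n - x 0‖ ^ 2) atTop (𝓝 ℓ) :=
    ⟨_, tendsto_atTop_ciSup hLmono ⟨_, Set.forall_mem_range.2 hLbdd⟩⟩
  have hLle : ∀ n, ‖x n - x 0‖ ^ 2 ≤ ℓ := fun n => hLmono.ge_of_tendsto hLlim n
  have hcauchy : CauchySeq x := by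
    apply cauchySeq_of_le_tendsto_0 (fun n => Real.sqrt (ℓ - ‖x n - x 0‖ ^ 2))
    · intro n m NN hn hm
      have key : ∀ {n' m' : ℕ}, NN ≤ n' → n' ≤ m' →
          dist (x n') (x m') ≤ Real.sqrt (ℓ - ‖x NN - x 0‖ ^ 2) := by
        intro n' m' h1 h2
        have h3 := hLkey h2
        have h4 := hLmono h1
        have h5 := hLle m'
        rw [dist_eq_norm, norm_sub_rev]
        apply Real.le_sqrt_of_sq_le
        simp only at h4
        linarith
      rcases le_total n m with h | h
      · exact key hn h
      · rw [dist_comm]; exact key hm h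
    · have h0 : Tendsto (fun n : ℕ => ℓ - ‖x n - x 0‖ ^ 2) atTop (𝓝 (ℓ - ℓ)) :=
        tendsto_const_nhds.sub hLlim
      have h1 : Tendsto (fun n : ℕ => ℓ - ‖x n - x 0‖ ^ 2) atTop (𝓝 0) := by
        simpa using h0
      have := h1.sqrt
      simpa using this
  obtain ⟨q, hq⟩ := cauchySeq_tendsto_of_complete hcauchy
  have hqC : q ∈ C := hCcl.mem_of_tendsto hq (Filter.Eventually.of_forall hxC)
  have tendsto_of_dist : ∀ (g : ℕ → H),
      Tendsto (fun n => ‖g n - x n‖) atTop (𝓝 0) → Tendsto g atTop (𝓝 q) := by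
    intro g hg
    have h1 : Tendsto (fun n => g n - x n) atTop (𝓝 0) :=
      tendsto_zero_iff_norm_tendsto_zero.2 hg
    have := h1.add hq
    simpa using this
  have hxx : Tendsto (fun n => ‖x (n + 1) - x n‖) atTop (𝓝 0) := by
    have h1 : Tendsto (fun n => x (n + 1)) atTop (𝓝 q) := hq.comp (tendsto_add_atTop_nat 1)
    have h2 : Tendsto (fun n => x (n + 1) - x n) atTop (𝓝 (q - q)) := h1.sub hq
    have h3 : Tendsto (fun n => x (n + 1) - x n) atTop (𝓝 0) := by simpa using h2
    simpa using h3.norm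
  have hzbx : Tendsto (fun n => ‖zbar n - x n‖) atTop (𝓝 0) := by
    apply squeeze_zero (fun n => norm_nonneg _) (g := fun n => 2 * ‖x (n + 1) - x n‖)
    · intro n
      have hmem : x (n + 1) ∈ Cset (n + 1) := hxCset (n + 1)
      rw [hCset] at hmem
      have h2 : ‖zbar n - x (n + 1)‖ ≤ ‖x n - x (n + 1)‖ := hmem.2
      have h3 : ‖zbar n - x n‖ ≤ ‖zbar n - x (n + 1)‖ + ‖x (n + 1) - x n‖ := by
        have h4 : zbar n - x n = (zbar n - x (n + 1)) + (x (n + 1) - x n) := by abel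
        rw [h4]; exact norm_add_le _ _
      rw [norm_sub_rev (x n)] at h2
      linarith
    · simpa using hxx.const_mul 2
  have hzjx : ∀ j, Tendsto (fun n => ‖z n j - x n‖) atTop (𝓝 0) := by
    intro j
    apply squeeze_zero (fun n => norm_nonneg _) (fun n => ?_) hzbx
    rw [hzbar]; exact hjM n j
  have hzj : ∀ j, Tendsto (fun n => z n j) atTop (𝓝 q) := fun j => tendsto_of_dist _ (hzjx j)
  have hzbq : Tendsto zbar atTop (𝓝 q) := tendsto_of_dist _ hzbx
  -- eventual bound on 1 - a n
  have habdd : Filter.IsBoundedUnder (· ≤ ·) atTop a :=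
    Filter.isBoundedUnder_of ⟨1, fun n => (ha1 n).le⟩
  have hac : ∀ᶠ n in atTop, a n < (limsup a atTop + 1) / 2 :=
    Filter.eventually_lt_of_limsup_lt (by linarith) habdd
  have hc0 : 0 < 1 - (limsup a atTop + 1) / 2 := by linarith
  set c0 : ℝ := 1 - (limsup a atTop + 1) / 2 with hc0def
  have ha' : ∀ᶠ n in atTop, c0 ≤ 1 - a n := by
    filter_upwards [hac] with n hn
    rw [hc0def]; linarith
  -- D n → 0
  have hD0 : ∀ n, 0 ≤ ‖x n - p‖ ^ 2 - ‖ybar n - p‖ ^ 2 := by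
    intro n
    have h1 : ‖ybar n - p‖ ≤ ‖x n - p‖ := by rw [hybar]; exact hyv3 p hpF n (iN n)
    have := pow_le_pow_left₀ (norm_nonneg _) h1 2
    linarith
  have hxp : Tendsto (fun n => ‖x n - p‖ ^ 2) atTop (𝓝 (‖q - p‖ ^ 2)) :=
    ((hq.sub tendsto_const_nhds).norm).pow 2
  have hzbp : Tendsto (fun n => ‖zbar n - p‖ ^ 2) atTop (𝓝 (‖q - p‖ ^ 2)) :=
    ((hzbq.sub tendsto_const_nhds).norm).pow 2
  have hE : Tendsto (fun n => (‖x n - p‖ ^ 2 - ‖zbar n - p‖ ^ 2) / c0) atTop (𝓝 0) := by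
    have h1 : Tendsto (fun n => ‖x n - p‖ ^ 2 - ‖zbar n - p‖ ^ 2) atTop
        (𝓝 (‖q - p‖ ^ 2 - ‖q - p‖ ^ 2)) := hxp.sub hzbp
    have h2 : Tendsto (fun n => ‖x n - p‖ ^ 2 - ‖zbar n - p‖ ^ 2) atTop (𝓝 0) := by
      simpa using h1
    simpa using h2.div_const c0
  have hDlim : Tendsto (fun n => ‖x n - p‖ ^ 2 - ‖ybar n - p‖ ^ 2) atTop (𝓝 0) := by
    apply squeeze_zero' (Filter.Eventually.of_forall hD0) _ hE
    filter_upwards [ha'] with n hn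
    have h1 := hzv p hpF n (jM n)
    rw [← hzbar] at h1
    have h3 : (1 - a n) * (‖x n - p‖ ^ 2 - ‖ybar n - p‖ ^ 2)
        ≤ ‖x n - p‖ ^ 2 - ‖zbar n - p‖ ^ 2 := by nlinarith [h1]
    have h2 : c0 * (‖x n - p‖ ^ 2 - ‖ybar n - p‖ ^ 2)
        ≤ ‖x n - p‖ ^ 2 - ‖zbar n - p‖ ^ 2 :=
      le_trans (mul_le_mul_of_nonneg_right hn (hD0 n)) h3
    rw [le_div_iff₀ hc0]
    linarith
  -- the A-differences tend to 0
  have he0 : (0:ℝ) < e := lt_of_lt_of_le (hr0 0) (hr 0).2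
  have hc1 : (0:ℝ) < d * (2 * α - e) := mul_pos hd (by linarith)
  have hu2 : ∀ n, d * (2 * α - e) * ‖A (iN n) (x n) - A (iN n) p‖ ^ 2
      ≤ ‖x n - p‖ ^ 2 - ‖ybar n - p‖ ^ 2 := by
    intro n
    have h1 := hyv2 p hpF n (iN n)
    rw [← hybar] at h1
    have h2 : d * (2 * α - e) ≤ r n * (2 * α - r n) := by
      have g1 := (hr n).1
      have g2 := (hr n).2
      nlinarith [hd]
    nlinarith [mul_le_mul_of_nonneg_right h2 (sq_nonneg ‖A (iN n) (x n) - A (iN n) p‖)]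
  have hulim : Tendsto (fun n => ‖A (iN n) (x n) - A (iN n) p‖) atTop (𝓝 0) := by
    apply aux_tendsto_of_sq _ (fun n => norm_nonneg _)
    have hbd : ∀ n, ‖A (iN n) (x n) - A (iN n) p‖ ^ 2
        ≤ (‖x n - p‖ ^ 2 - ‖ybar n - p‖ ^ 2) / (d * (2 * α - e)) := by
      intro n
      rw [le_div_iff₀ hc1]
      linarith [hu2 n]
    exact squeeze_zero (fun n => sq_nonneg _) hbd
      (by simpa using hDlim.div_const (d * (2 * α - e)))
  -- ‖ybar n - x n‖ → 0
  have hxb : ∀ n, ‖x n - p‖ ≤ 2 * ‖p - x 0‖ := by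
    intro n
    have h2 : ‖x n - x 0‖ ≤ ‖p - x 0‖ :=
      aux_sq_le (hLbdd n) (norm_nonneg _) (norm_nonneg _)
    have h3 : ‖x n - p‖ ≤ ‖x n - x 0‖ + ‖x 0 - p‖ := by
      have h4 : x n - p = (x n - x 0) + (x 0 - p) := by abel
      rw [h4]; exact norm_add_le _ _
    rw [norm_sub_rev (x 0)] at h3
    linarith
  have hK : ∀ n, ‖ybar n - x n‖ ≤ 4 * ‖p - x 0‖ := by
    intro n
    have h1 : ‖ybar n - p‖ ≤ ‖x n - p‖ := by rw [hybar]; exact hyv3 p hpF n (iN n)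
    have h4 : ‖ybar n - x n‖ ≤ ‖ybar n - p‖ + ‖p - x n‖ := by
      have h5 : ybar n - x n = (ybar n - p) + (p - x n) := by abel
      rw [h5]; exact norm_add_le _ _
    rw [norm_sub_rev p] at h4
    linarith [hxb n]
  have hybx : Tendsto (fun n => ‖ybar n - x n‖) atTop (𝓝 0) := by
    apply aux_tendsto_of_sq _ (fun n => norm_nonneg _)
    have hbd : ∀ n, ‖ybar n - x n‖ ^ 2
        ≤ (‖x n - p‖ ^ 2 - ‖ybar n - p‖ ^ 2)
        + 2 * e * (4 * ‖p - x 0‖) * ‖A (iN n) (x n) - A (iN n) p‖ := by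
      intro n
      have h1 := hyv p hpF n (iN n)
      rw [← hybar] at h1
      have hs := hK n
      have hro := hr0 n
      have hre := (hr n).2
      have hu0 : (0:ℝ) ≤ ‖A (iN n) (x n) - A (iN n) p‖ := norm_nonneg _
      have hs0 : (0:ℝ) ≤ ‖ybar n - x n‖ := norm_nonneg _
      have m1 : 2 * r n * (‖A (iN n) (x n) - A (iN n) p‖ * ‖ybar n - x n‖)
          ≤ 2 * e * (‖A (iN n) (x n) - A (iN n) p‖ * ‖ybar n - x n‖) :=
        mul_le_mul_of_nonneg_right (by linarith) (mul_nonneg hu0 hs0)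
      have m2 : ‖A (iN n) (x n) - A (iN n) p‖ * ‖ybar n - x n‖
          ≤ ‖A (iN n) (x n) - A (iN n) p‖ * (4 * ‖p - x 0‖) :=
        mul_le_mul_of_nonneg_left hs hu0
      have m3 : 2 * e * (‖A (iN n) (x n) - A (iN n) p‖ * ‖ybar n - x n‖)
          ≤ 2 * e * (‖A (iN n) (x n) - A (iN n) p‖ * (4 * ‖p - x 0‖)) :=
        mul_le_mul_of_nonneg_left m2 (by linarith)
      have m4 : 0 ≤ 2 * r n * α * ‖A (iN n) (x n) - A (iN n) p‖ ^ 2 :=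
        mul_nonneg (mul_nonneg (by linarith) hα.le) (sq_nonneg _)
      nlinarith [m1, m3, m4]
    have hgl : Tendsto (fun n => (‖x n - p‖ ^ 2 - ‖ybar n - p‖ ^ 2)
        + 2 * e * (4 * ‖p - x 0‖) * ‖A (iN n) (x n) - A (iN n) p‖) atTop
        (𝓝 (0 + 2 * e * (4 * ‖p - x 0‖) * 0)) :=
      hDlim.add (hulim.const_mul _)
    exact squeeze_zero (fun n => sq_nonneg _) hbd (by simpa using hgl)
  have hybq : Tendsto ybar atTop (𝓝 q) := tendsto_of_dist _ hybx
  have hyix : ∀ i, Tendsto (fun n => ‖y n i - x n‖) atTop (𝓝 0) := by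
    intro i
    apply squeeze_zero (fun n => norm_nonneg _) (fun n => ?_) hybx
    rw [hybar]; exact hiN n i
  have hyi : ∀ i, Tendsto (fun n => y n i) atTop (𝓝 q) := fun i => tendsto_of_dist _ (hyix i)
  -- S j (ybar n) - ybar n → 0
  have htx : ∀ j, Tendsto
      (fun n => ‖(β n • ybar n + (1 - β n) • S j (ybar n)) - x n‖) atTop (𝓝 0) := by
    intro j
    apply squeeze_zero' (Filter.Eventually.of_forall fun n => norm_nonneg _)
      (g := fun n => ‖z n j - x n‖ / c0) _ (by simpa using (hzjx j).div_const c0)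
    filter_upwards [ha'] with n hn
    have hco : z n j - x n = (1 - a n) • ((β n • ybar n + (1 - β n) • S j (ybar n)) - x n) := by
      rw [hz]; module
    have hnorm : ‖z n j - x n‖
        = (1 - a n) * ‖(β n • ybar n + (1 - β n) • S j (ybar n)) - x n‖ := by
      rw [hco, norm_smul, Real.norm_eq_abs, abs_of_pos (by linarith)]
    rw [le_div_iff₀ hc0, hnorm]
    have := norm_nonneg ((β n • ybar n + (1 - β n) • S j (ybar n)) - x n)
    nlinarith
  have hSy : ∀ j, Tendsto (fun n => ‖S j (ybar n) - ybar n‖) atTop (𝓝 0) := by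
    intro j
    have h1 : Tendsto (fun n => ‖(β n • ybar n + (1 - β n) • S j (ybar n)) - ybar n‖)
        atTop (𝓝 0) := by
      apply squeeze_zero (fun n => norm_nonneg _)
        (g := fun n => ‖(β n • ybar n + (1 - β n) • S j (ybar n)) - x n‖ + ‖ybar n - x n‖)
        _ (by simpa using (htx j).add hybx)
      intro n
      have h4 : (β n • ybar n + (1 - β n) • S j (ybar n)) - ybar n
          = ((β n • ybar n + (1 - β n) • S j (ybar n)) - x n) + (x n - ybar n) := by abel
      rw [h4]
      have := norm_add_le ((β n • ybar n + (1 - β n) • S j (ybar n)) - x n) (x n - ybar n)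
      rw [norm_sub_rev (x n)] at this
      exact this
    apply squeeze_zero (fun n => norm_nonneg _)
      (g := fun n => ‖(β n • ybar n + (1 - β n) • S j (ybar n)) - ybar n‖ / (1 - b))
      _ (by simpa using h1.div_const (1 - b))
    intro n
    have hco : (β n • ybar n + (1 - β n) • S j (ybar n)) - ybar n
        = (1 - β n) • (S j (ybar n) - ybar n) := by module
    rw [le_div_iff₀ (by linarith : (0:ℝ) < 1 - b), hco, norm_smul, Real.norm_eq_abs,
      abs_of_nonneg (by linarith [(hβ n).2] : (0:ℝ) ≤ 1 - β n)]
    have h5 := (hβ n).2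
    nlinarith [norm_nonneg (S j (ybar n) - ybar n)]
  -- S j is Lipschitz on C
  have hSLip : ∀ j, ∀ u ∈ C, ∀ v ∈ C,
      ‖S j u - S j v‖ ≤ ((1 + κ) / (1 - κ)) * ‖u - v‖ := by
    intro j u huC v hvC
    have hps := hpseudo j u huC v hvC
    have htri : ‖(u - S j u) - (v - S j v)‖ ≤ ‖u - v‖ + ‖S j u - S j v‖ := by
      have hco : (u - S j u) - (v - S j v) = (u - v) - (S j u - S j v) := by abel
      rw [hco]; exact norm_sub_le _ _
    have h2 : κ * ‖(u - S j u) - (v - S j v)‖ ^ 2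
        ≤ κ * (‖u - v‖ + ‖S j u - S j v‖) ^ 2 :=
      mul_le_mul_of_nonneg_left (pow_le_pow_left₀ (norm_nonneg _) htri 2) hκ0
    have hkey : (1 - κ) * ‖S j u - S j v‖ ≤ (1 + κ) * ‖u - v‖ := by
      nlinarith [hps, h2, norm_nonneg (S j u - S j v), norm_nonneg (u - v),
        sq_nonneg (‖S j u - S j v‖ + ‖u - v‖), sq_nonneg (‖S j u - S j v‖ - ‖u - v‖)]
    rw [div_mul_eq_mul_div, le_div_iff₀ (by linarith : (0:ℝ) < 1 - κ)]
    linarith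
  have hfix : ∀ j, S j q = q := by
    intro j
    have hb' : ∀ n, ‖S j q - q‖ ≤ ((1 + κ) / (1 - κ)) * ‖q - ybar n‖
        + ‖S j (ybar n) - ybar n‖ + ‖ybar n - q‖ := by
      intro n
      have h1 : S j q - q = (S j q - S j (ybar n)) + (S j (ybar n) - ybar n) + (ybar n - q) := by
        abel
      have h2 : ‖S j q - q‖ ≤ ‖S j q - S j (ybar n)‖ + ‖S j (ybar n) - ybar n‖
          + ‖ybar n - q‖ := by
        rw [h1]
        exact (norm_add_le _ _).trans (by gcongr ?_ + _; exact norm_add_le _ _)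
      have h3 := hSLip j q hqC (ybar n) (hybC n)
      linarith
    have t1 : Tendsto (fun n => ‖q - ybar n‖) atTop (𝓝 0) := by
      have h := (tendsto_const_nhds (x := q) (f := atTop)).sub hybq
      have h2 : Tendsto (fun n => q - ybar n) atTop (𝓝 0) := by simpa using h
      simpa using h2.norm
    have t3 : Tendsto (fun n => ‖ybar n - q‖) atTop (𝓝 0) := by
      have h := hybq.sub (tendsto_const_nhds (x := q) (f := atTop))
      have h2 : Tendsto (fun n => ybar n - q) atTop (𝓝 0) := by simpa using h
      simpa using h2.norm
    have hlim0 : Tendsto (fun n => ((1 + κ) / (1 - κ)) * ‖q - ybar n‖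
        + ‖S j (ybar n) - ybar n‖ + ‖ybar n - q‖) atTop (𝓝 0) := by
      have := ((t1.const_mul ((1 + κ) / (1 - κ))).add (hSy j)).add t3
      simpa using this
    have h0 : ‖S j q - q‖ ≤ 0 := ge_of_tendsto hlim0 (Filter.Eventually.of_forall hb')
    have h1 : ‖S j q - q‖ = 0 := le_antisymm h0 (norm_nonneg _)
    exact sub_eq_zero.1 (norm_eq_zero.1 h1)
  -- A i (x n) → A i q
  have hALip : ∀ i, Tendsto (fun n => A i (x n)) atTop (𝓝 (A i q)) := by
    intro i
    have hb' : ∀ n, ‖A i (x n) - A i q‖ ≤ (1 / α) * ‖x n - q‖ := by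
      intro n
      have h1 := hism i (x n) (hxC n) q hqC
      have h2 := real_inner_le_norm (A i (x n) - A i q) (x n - q)
      rcases eq_or_lt_of_le (norm_nonneg (A i (x n) - A i q)) with h3 | h3
      · rw [← h3]; positivity
      · have h4 : α * ‖A i (x n) - A i q‖ ≤ ‖x n - q‖ := by
          nlinarith [h1, h2, h3]
        rw [one_div, ← div_eq_inv_mul, le_div_iff₀ hα]
        linarith
    have hdiff : Tendsto (fun n => ‖A i (x n) - A i q‖) atTop (𝓝 0) := by
      apply squeeze_zero (fun n => norm_nonneg _) hb'
      have hxq : Tendsto (fun n => ‖x n - q‖) atTop (𝓝 0) := by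
        have h := hq.sub (tendsto_const_nhds (x := q) (f := atTop))
        have h2 : Tendsto (fun n => x n - q) atTop (𝓝 0) := by simpa using h
        simpa using h2.norm
      simpa using hxq.const_mul (1 / α)
    have h4 := tendsto_zero_iff_norm_tendsto_zero.2 hdiff
    have h5 := h4.add (tendsto_const_nhds (x := A i q) (f := atTop))
    simpa using h5
  -- the key GEP inequality at q
  have hkeyGEP : ∀ i, ∀ w ∈ C, f i w q ≤ ⟪A i q, w - q⟫ := by
    intro i w hw
    have h1 : ∀ n, f i w (y n i) ≤ ⟪A i (x n), w - y n i⟫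
        + ⟪w - y n i, (1 / r n) • (y n i - x n)⟫ := by
      intro n
      have ha' := (hy n i).2 w hw
      have hb' := hfA2 i (y n i) (hyC n i) w hw
      have hc' : ⟪w - y n i, (1 / r n) • (y n i - x n)⟫
          = (1 / r n) * ⟪w - y n i, y n i - x n⟫ := real_inner_smul_right _ _ _
      linarith
    have htg : Tendsto (fun n => ⟪A i (x n), w - y n i⟫
        + ⟪w - y n i, (1 / r n) • (y n i - x n)⟫) atTop (𝓝 (⟪A i q, w - q⟫)) := by
      have t1 : Tendsto (fun n => w - y n i) atTop (𝓝 (w - q)) :=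
        tendsto_const_nhds.sub (hyi i)
      have t2 : Tendsto (fun n => (1 / r n) • (y n i - x n)) atTop (𝓝 0) := by
        have hbd : ∀ n, ‖(1 / r n) • (y n i - x n)‖ ≤ (1 / d) * ‖y n i - x n‖ := by
          intro n
          rw [norm_smul, Real.norm_eq_abs, abs_of_pos (one_div_pos.2 (hr0 n))]
          have h6 : 1 / r n ≤ 1 / d := one_div_le_one_div_of_le hd (hr n).1
          exact mul_le_mul_of_nonneg_right h6 (norm_nonneg _)
        exact squeeze_zero_norm hbd (by simpa using (hyix i).const_mul (1 / d))
      have t3a : Tendsto (fun n => ⟪A i (x n), w - y n i⟫) atTop (𝓝 (⟪A i q, w - q⟫)) :=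
        Filter.Tendsto.inner (𝕜 := ℝ) (hALip i) t1
      have t3b : Tendsto (fun n => ⟪w - y n i, (1 / r n) • (y n i - x n)⟫) atTop
          (𝓝 (⟪w - q, (0 : H)⟫)) := Filter.Tendsto.inner (𝕜 := ℝ) t1 t2
      have t3 := t3a.add t3b
      simpa using t3
    by_contra hcon
    push_neg at hcon
    have hc2 : (⟪A i q, w - q⟫ + f i w q) / 2 < f i w q := by linarith
    have hlsc := hfA4lsc i w hw q hqC ((⟪A i q, w - q⟫ + f i w q) / 2) hc2
    have htq : Tendsto (fun n => y n i) atTop (𝓝[C] q) :=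
      tendsto_nhdsWithin_iff.2 ⟨hyi i, Filter.Eventually.of_forall (fun n => hyC n i)⟩
    have hev : ∀ᶠ n in atTop, (⟪A i q, w - q⟫ + f i w q) / 2
        ≤ ⟪A i (x n), w - y n i⟫ + ⟪w - y n i, (1 / r n) • (y n i - x n)⟫ :=
      (htq.eventually hlsc).mono fun n hn => le_trans (le_of_lt hn) (h1 n)
    have := ge_of_tendsto htg hev
    linarith
  -- q solves each GEP
  have hGEP : ∀ i, ∀ w ∈ C, 0 ≤ f i q w + ⟪A i q, w - q⟫ := by
    intro i w hw
    have hwtC : ∀ t : ℝ, 0 < t → t < 1 → t • w + (1 - t) • q ∈ C := fun t h0 h1 =>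
      hCcv hw hqC h0.le (by linarith) (by ring)
    have hlow : ∀ t : ℝ, 0 < t → t < 1 →
        -((1 - t) * ⟪A i q, w - q⟫) ≤ f i (t • w + (1 - t) • q) w := by
      intro t ht0 ht1
      have hwt := hwtC t ht0 ht1
      have hcv := (hfA4conv i _ hwt).2 hw hqC ht0.le (by linarith : (0:ℝ) ≤ 1 - t) (by ring)
      have h0 : f i (t • w + (1 - t) • q) (t • w + (1 - t) • q) = 0 := hfA1 i _ hwt
      have h2 : f i (t • w + (1 - t) • q) q ≤ t * ⟪A i q, w - q⟫ := by
        have h3 := hkeyGEP i _ hwt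
        have he' : (t • w + (1 - t) • q) - q = t • (w - q) := by module
        rw [he', real_inner_smul_right] at h3
        exact h3
      have h3 : 0 ≤ t * (f i (t • w + (1 - t) • q) w + (1 - t) * ⟪A i q, w - q⟫) := by
        have h4 := mul_le_mul_of_nonneg_left h2 (by linarith : (0:ℝ) ≤ 1 - t)
        rw [h0] at hcv
        simp only [smul_eq_mul] at hcv
        nlinarith [hcv, h4]
      have h5 : t * 0 ≤ t * (f i (t • w + (1 - t) • q) w + (1 - t) * ⟪A i q, w - q⟫) := by
        simpa using h3
      have := le_of_mul_le_mul_left h5 ht0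
      linarith
    have hupper : ∀ᶠ t in 𝓝[>] (0:ℝ),
        (fun t : ℝ => f i (t • w + (1 - t) • q) w) t ≤ 1 - f i w q := by
      have hlsc := hfA4lsc i w hw q hqC (f i w q - 1) (by linarith)
      have htq : Tendsto (fun t : ℝ => t • w + (1 - t) • q) (𝓝[>] 0) (𝓝[C] q) := by
        apply tendsto_nhdsWithin_iff.2
        constructor
        · have hcont : Continuous (fun t : ℝ => t • w + (1 - t) • q) := by
            fun_prop
          have h9 := hcont.tendsto 0
          have h10 : Tendsto (fun t : ℝ => t • w + (1 - t) • q) (𝓝 0) (𝓝 q) := by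
            simpa using h9
          exact h10.mono_left nhdsWithin_le_nhds
        · filter_upwards [Ioo_mem_nhdsGT_of_mem (Set.left_mem_Ico.2 zero_lt_one)] with t ht
          exact hwtC t ht.1 ht.2
      filter_upwards [htq.eventually hlsc,
        Ioo_mem_nhdsGT_of_mem (Set.left_mem_Ico.2 zero_lt_one)] with t h1 h2
      have hA2 := hfA2 i _ (hwtC t h2.1 h2.2) w hw
      linarith
    have hco : -⟪A i q, w - q⟫
        ≤ limsup (fun t : ℝ => f i (t • w + (1 - t) • q) w) (𝓝[>] (0:ℝ)) := by
      rw [Filter.limsup_eq]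
      apply le_csInf ⟨1 - f i w q, hupper⟩
      intro s hs
      have hev : ∀ᶠ t in 𝓝[>] (0:ℝ), -((1 - t) * ⟪A i q, w - q⟫) ≤ s := by
        filter_upwards [hs, Ioo_mem_nhdsGT_of_mem (Set.left_mem_Ico.2 zero_lt_one)]
          with t h1 h2
        linarith [hlow t h2.1 h2.2]
      have htt : Tendsto (fun t : ℝ => -((1 - t) * ⟪A i q, w - q⟫)) (𝓝[>] (0:ℝ))
          (𝓝 (-⟪A i q, w - q⟫)) := by
        have hcont : Tendsto (fun t : ℝ => -((1 - t) * ⟪A i q, w - q⟫)) (𝓝 (0:ℝ))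
            (𝓝 (-((1 - 0) * ⟪A i q, w - q⟫))) :=
          ((tendsto_const_nhds.sub tendsto_id).mul_const _).neg
        have : Tendsto (fun t : ℝ => -((1 - t) * ⟪A i q, w - q⟫)) (𝓝 (0:ℝ))
            (𝓝 (-⟪A i q, w - q⟫)) := by simpa using hcont
        exact this.mono_left nhdsWithin_le_nhds
      exact le_of_tendsto htt hev
    have hA3 := hfA3 i q hqC w hw w hw
    linarith
  have hqF : q ∈ F := by
    rw [hF]; exact ⟨⟨hqC, hGEP⟩, hfix⟩
  refine ⟨q, ⟨hqF, ?_⟩, hq, hyi, hzj⟩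
  intro v hv
  have hvn : ∀ n, ‖x (n + 1) - x 0‖ ≤ ‖v - x 0‖ := fun n =>
    (hxproj n).2 v (hFsub (n + 1) hv)
  have hlim : Tendsto (fun n => ‖x (n + 1) - x 0‖) atTop (𝓝 ‖q - x 0‖) := by
    have h1 : Tendsto (fun n => x (n + 1)) atTop (𝓝 q) := hq.comp (tendsto_add_atTop_nat 1)
    exact (h1.sub tendsto_const_nhds).norm
  exact le_of_tendsto hlim (Filter.Eventually.of_forall hvn)
end
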